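/- arXiv:1502.02973 — 10 statements merged into one kernel-verified Lean document; each statement's English description precedes it below -/
import Mathlib

section
/- Suppose S ⊆ Fin N is a uniqueness set for W, i.e. the only f ∈ W with f(u) = 0 for every u ∈ S is f = 0. Then the family {P δ_u}_{u ∈ S} is a frame in W with upper frame bound 1: there exists a constant A > 0 such that for every f ∈ W, A‖f‖² ≤ Σ_{u ∈ S} ⟨f, P δ_u⟩² ≤ ‖f‖². (Equivalently, since ⟨f, P δ_u⟩ = f(u) for f ∈ W: A‖f‖² ≤ Σ_{u ∈ S} f(u)² ≤ ‖f‖².) -/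
/-! Since `P` is self-adjoint and fixes `f ∈ W`, `⟪f, P δ_u⟫ = f(u)`, so both bounds are about
`∑_{u ∈ S} f(u)²`. This is part of `‖f‖²`, giving the upper bound `1`. A uniqueness set makes the
restriction map `f ↦ f|_S` injective on `W`, and an injective linear map on a finite-dimensional
space is bounded below, giving the lower bound. -/

open scoped RealInnerProductSpace

theorem exists_pos_mul_norm_sq_le_sum_sq {V ι : Type*} [NormedAddCommGroup V] [NormedSpace ℝ V]
    [FiniteDimensional ℝ V] [Fintype ι] (ℓ : ι → V →ₗ[ℝ] ℝ)
    (hℓ : ∀ v, (∀ i, ℓ i v = 0) → v = 0) :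
    ∃ A > (0 : ℝ), ∀ v, A * ‖v‖ ^ 2 ≤ ∑ i, ℓ i v ^ 2 := by
  let T : V →ₗ[ℝ] EuclideanSpace ℝ ι :=
    (WithLp.linearEquiv 2 ℝ (ι → ℝ)).symm.toLinearMap ∘ₗ LinearMap.pi ℓ
  have hT : LinearMap.ker T = ⊥ :=
    LinearMap.ker_eq_bot'.2 fun v hv ↦ hℓ v fun i ↦ congrFun (congrArg WithLp.ofLp hv) i
  obtain ⟨K, hK, hTK⟩ := T.exists_antilipschitzWith hT
  refine ⟨(K ^ 2 : ℝ)⁻¹, by positivity, fun v ↦ ?_⟩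
  rw [inv_mul_le_iff₀ (by positivity)]
  calc ‖v‖ ^ 2 ≤ (K * ‖T v‖) ^ 2 := by gcongr; exact ZeroHomClass.bound_of_antilipschitz T hTK v
    _ = K ^ 2 * ∑ i, ℓ i v ^ 2 := by rw [mul_pow, EuclideanSpace.real_norm_sq_eq]; rfl

theorem EuclideanSpace.sum_sq_le_norm_sq {ι : Type*} [Fintype ι] (f : EuclideanSpace ℝ ι)
    (S : Finset ι) : ∑ u ∈ S, f u ^ 2 ≤ ‖f‖ ^ 2 := by
  rw [EuclideanSpace.real_norm_sq_eq]
  exact Finset.sum_le_sum_of_subset_of_nonneg S.subset_univ fun _ _ _ ↦ sq_nonneg _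

theorem Submodule.inner_orthogonalProjectionOnto_single_of_mem {ι : Type*} [Fintype ι]
    [DecidableEq ι] (W : Submodule ℝ (EuclideanSpace ℝ ι)) {f : EuclideanSpace ℝ ι} (hf : f ∈ W)
    (u : ι) : ⟪f, (W.orthogonalProjectionOnto (EuclideanSpace.single u (1 : ℝ)) :
      EuclideanSpace ℝ ι)⟫ = f u := by
  rw [← W.coe_inner ⟨f, hf⟩, Submodule.inner_orthogonalProjectionOnto_eq_of_mem_left,
    EuclideanSpace.inner_single_right]
  simp

/-- If `S` is a uniqueness set for the bandlimited subspace `W`, then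
`{P δ_u}_{u ∈ S}` is a frame in `W` with upper frame bound `1`. -/
theorem uniqueness_set_gives_frame
    {N : ℕ} (W : Submodule ℝ (EuclideanSpace ℝ (Fin N)))
    (S : Finset (Fin N))
    (hU : ∀ f ∈ W, (∀ u ∈ S, f u = 0) → f = 0) :
    ∃ A > (0 : ℝ), ∀ f ∈ W,
      A * ‖f‖ ^ 2 ≤
        ∑ u ∈ S, ⟪f, ((Submodule.orthogonalProjectionOnto W (EuclideanSpace.single u (1 : ℝ)) :
          EuclideanSpace ℝ (Fin N)))⟫ ^ 2 ∧
      ∑ u ∈ S, ⟪f, ((Submodule.orthogonalProjectionOnto W (EuclideanSpace.single u (1 : ℝ)) :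
          EuclideanSpace ℝ (Fin N)))⟫ ^ 2 ≤ ‖f‖ ^ 2 := by
  let restrict : S → W →ₗ[ℝ] ℝ := fun u ↦ EuclideanSpace.projₗ (u : Fin N) ∘ₗ W.subtype
  obtain ⟨A, hA, hlower⟩ := exists_pos_mul_norm_sq_le_sum_sq restrict fun f hf ↦
    Subtype.ext (hU f f.2 fun u hu ↦ hf ⟨u, hu⟩)
  refine ⟨A, hA, fun f hf ↦ ?_⟩
  simp only [W.inner_orthogonalProjectionOnto_single_of_mem hf]
  refine ⟨?_, f.sum_sq_le_norm_sq S⟩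
  rw [← S.sum_coe_sort]
  exact hlower ⟨f, hf⟩
end

section
/- Suppose S ⊆ Fin N is a uniqueness set for W (the only f ∈ W vanishing on S is 0), let f_* ∈ W, and let the sequence (f^{(k)})_{k≥0} satisfy the ILSR iteration f^{(k+1)} = f^{(k)} + P(Σ_{u ∈ S} (f_*(u) − f^{(k)}(u)) • δ_u) with f^{(0)} ∈ W. Then f^{(k)} converges to f_* as k → ∞. -/
/-!
The error `e_k = f_* - f^{(k)}` starts in `W` and obeys `e_{k+1} = e_k - P (M e_k)`, where `M`
zeroes the coordinates outside `S`. Since `⟪x, M x⟫ = ‖M x‖²` and `‖P (M x)‖ ≤ ‖M x‖`, every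
`x ∈ W` satisfies `‖x - P (M x)‖² ≤ ‖x‖² - ‖M x‖²`, and `M x ≠ 0` for `x ≠ 0` because `S` is a
uniqueness set. So the error map is a strict contraction of the finite-dimensional space `W`;
compactness of its unit sphere makes its operator norm `< 1`, and the errors decay geometrically.
-/

open Filter Topology

open scoped RealInnerProductSpace

theorem ContinuousLinearMap.norm_lt_one_of_norm_apply_lt {E F : Type*} [NormedAddCommGroup E]
    [NormedSpace ℝ E] [FiniteDimensional ℝ E] [SeminormedAddCommGroup F] [NormedSpace ℝ F]
    (T : E →L[ℝ] F) (hT : ∀ x ≠ 0, ‖T x‖ < ‖x‖) : ‖T‖ < 1 := by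
  rcases (Metric.sphere (0 : E) 1).eq_empty_or_nonempty with hempty | hne
  · refine (T.opNorm_le_of_unit_norm le_rfl fun x hx => ?_).trans_lt zero_lt_one
    exact absurd (mem_sphere_zero_iff_norm.mpr hx) (hempty ▸ Set.notMem_empty x)
  · obtain ⟨x₀, hx₀, hmax⟩ := (isCompact_sphere (0 : E) 1).exists_isMaxOn hne
      (T.continuous.norm.continuousOn)
    rw [mem_sphere_zero_iff_norm] at hx₀
    calc ‖T‖ ≤ ‖T x₀‖ := T.opNorm_le_of_unit_norm (norm_nonneg _)
            fun x hx => hmax (mem_sphere_zero_iff_norm.mpr hx)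
      _ < 1 := hx₀ ▸ hT x₀ (by rintro rfl; simp at hx₀)

section

variable {E : Type*} [NormedAddCommGroup E] [InnerProductSpace ℝ E]

theorem Submodule.norm_sub_starProjection_sq_le (K : Submodule ℝ E) [K.HasOrthogonalProjection]
    {x y : E} (hx : x ∈ K) (hxy : ⟪x, y⟫ = ‖y‖ ^ 2) :
    ‖x - K.starProjection y‖ ^ 2 ≤ ‖x‖ ^ 2 - ‖y‖ ^ 2 := by
  have hinner : ⟪x, K.starProjection y⟫ = ⟪x, y⟫ := by
    rw [← K.inner_starProjection_left_eq_right, K.starProjection_eq_self_iff.mpr hx]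
  have hnorm := K.norm_starProjection_apply_le y
  rw [norm_sub_sq_real, hinner, hxy]
  nlinarith [norm_nonneg (K.starProjection y)]

theorem Submodule.tendsto_zero_of_sub_starProjection_iterate (K : Submodule ℝ E)
    [FiniteDimensional ℝ K] (M : E →L[ℝ] E) (hM : ∀ x, ⟪x, M x⟫ = ‖M x‖ ^ 2)
    (hK : ∀ x ∈ K, M x = 0 → x = 0) {e : ℕ → E} (he0 : e 0 ∈ K)
    (he : ∀ k, e (k + 1) = e k - K.starProjection (M (e k))) :
    Tendsto e atTop (𝓝 0) := by
  set G : K →L[ℝ] K := ContinuousLinearMap.id ℝ K - K.orthogonalProjectionOnto ∘L M ∘L K.subtypeL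
  have hG : ∀ x : K, (G x : E) = x - K.starProjection (M x) := fun x => rfl
  have hcontract : ∀ x ≠ 0, ‖G x‖ < ‖x‖ := by
    intro x hx
    have hMx : 0 < ‖M x‖ := norm_pos_iff.mpr fun h => hx (Subtype.ext (hK x x.2 h))
    have hle := K.norm_sub_starProjection_sq_le x.2 (hM x)
    rw [← hG] at hle
    have hlt : ‖(G x : E)‖ ^ 2 < ‖(x : E)‖ ^ 2 := by nlinarith
    exact lt_of_pow_lt_pow_left₀ 2 (norm_nonneg _) hlt
  have hiter : ∀ k, e k = ((G ^ k) ⟨e 0, he0⟩ : E) := by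
    intro k
    induction k with
    | zero => rfl
    | succ k ih => rw [he, ih, pow_succ', mul_apply_eq_comp, hG]
  have hpow :=
    tendsto_pow_atTop_nhds_zero_of_norm_lt_one (G.norm_lt_one_of_norm_apply_lt hcontract)
  have happly := ((continuous_subtype_val.comp
    (ContinuousLinearMap.apply ℝ K (⟨e 0, he0⟩ : K)).continuous).tendsto 0).comp hpow
  rw [funext hiter]
  simpa only [Function.comp_def, ContinuousLinearMap.apply_apply, zero_apply,
    ZeroMemClass.coe_zero] using happly

end

section

variable {ι : Type*} [Fintype ι] [DecidableEq ι]

noncomputable def samplingProjection (S : Finset ι) :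
    EuclideanSpace ℝ ι →L[ℝ] EuclideanSpace ℝ ι :=
  ∑ u ∈ S, (EuclideanSpace.proj u).smulRight (EuclideanSpace.single u 1)

theorem samplingProjection_apply (S : Finset ι) (x : EuclideanSpace ℝ ι) :
    samplingProjection S x = ∑ u ∈ S, x u • EuclideanSpace.single u (1 : ℝ) := by
  simp [samplingProjection]

theorem samplingProjection_apply_of_mem {S : Finset ι} {u : ι} (hu : u ∈ S)
    (x : EuclideanSpace ℝ ι) : samplingProjection S x u = x u := by
  simp [samplingProjection_apply, Pi.single_apply, hu]

theorem inner_samplingProjection_right (S : Finset ι) (x y : EuclideanSpace ℝ ι) :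
    ⟪y, samplingProjection S x⟫ = ∑ u ∈ S, x u * y u := by
  simp [samplingProjection_apply, inner_sum, inner_smul_right, EuclideanSpace.inner_single_right]

theorem inner_samplingProjection_self (S : Finset ι) (x : EuclideanSpace ℝ ι) :
    ⟪x, samplingProjection S x⟫ = ‖samplingProjection S x‖ ^ 2 := by
  rw [← real_inner_self_eq_norm_sq, inner_samplingProjection_right, inner_samplingProjection_right]
  exact Finset.sum_congr rfl fun u hu => by rw [samplingProjection_apply_of_mem hu]

end

/-- ILSR convergence: if `S` is a uniqueness set for `W`, `f_* ∈ W`,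
`f^{(0)} ∈ W`, and `f^{(k+1)} = f^{(k)} + P(Σ_{u∈S} (f_*(u) − f^{(k)}(u)) • δ_u)`,
then `f^{(k)} → f_*`. -/
theorem ILSR_convergence
    {N : ℕ} (W : Submodule ℝ (EuclideanSpace ℝ (Fin N)))
    (S : Finset (Fin N))
    (hU : ∀ g ∈ W, (∀ u ∈ S, g u = 0) → g = 0)
    (fstar : EuclideanSpace ℝ (Fin N)) (hfstar : fstar ∈ W)
    (f : ℕ → EuclideanSpace ℝ (Fin N)) (hf0 : f 0 ∈ W)
    (hiter : ∀ k : ℕ, f (k + 1) = f k +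
      (W.orthogonalProjectionOnto
        (∑ u ∈ S, (fstar u - f k u) • EuclideanSpace.single u (1 : ℝ)) :
        EuclideanSpace ℝ (Fin N))) :
    Filter.Tendsto f Filter.atTop (nhds fstar) := by
  have hS : ∀ g ∈ W, samplingProjection S g = 0 → g = 0 := fun g hg hzero =>
    hU g hg fun u hu => by rw [← samplingProjection_apply_of_mem hu, hzero, PiLp.zero_apply]
  have herror : ∀ k, fstar - f (k + 1) =
      (fstar - f k) - W.starProjection (samplingProjection S (fstar - f k)) := by
    intro k
    rw [hiter, samplingProjection_apply, Submodule.starProjection_apply]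
    simp only [PiLp.sub_apply]
    abel
  have hlim := W.tendsto_zero_of_sub_starProjection_iterate (samplingProjection S)
    (inner_samplingProjection_self S) hS (e := fun k => fstar - f k)
    (W.sub_mem hfstar hf0) herror
  simpa using (tendsto_const_nhds (x := fstar)).sub hlim
end

section
/- Let β > 0, suppose T maps W into W and ⟨T g, g⟩ ≥ A‖g‖² for every g ∈ W with A ≥ 0, and let f_* ∈ W and f̃ ∈ W satisfy β • f̃ + T f̃ = T f_*. Then the bias satisfies ‖f̃ − f_*‖ ≤ (β/(β + A)) · ‖f_*‖. -/
open scoped RealInnerProductSpace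

/-!
Put `e = f̃ - f_*`. The equation gives `T e = -β f̃ = -β (e + f_*)`, so coercivity on `W` and
Cauchy–Schwarz yield `A ‖e‖² ≤ ⟪T e, e⟫ = -β ‖e‖² - β ⟪f_*, e⟫ ≤ -β ‖e‖² + β ‖f_*‖ ‖e‖`,
that is `(β + A) ‖e‖² ≤ β ‖f_*‖ ‖e‖`; dividing by `(β + A) ‖e‖` gives the bound.
-/

section

variable {E : Type*} [NormedAddCommGroup E] [InnerProductSpace ℝ E]

theorem inner_map_sub_eq_of_smul_add_eq (T : E →ₗ[ℝ] E) {β : ℝ} {x y : E}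
    (heq : β • x + T x = T y) :
    ⟪T (x - y), x - y⟫ = -β * (‖x - y‖ ^ 2 + ⟪y, x - y⟫) := by
  have hT : T (x - y) = -(β • ((x - y) + y)) := by
    rw [map_sub, ← heq, sub_add_cancel]
    abel
  rw [hT, inner_neg_left, real_inner_smul_left, inner_add_left, real_inner_self_eq_norm_sq]
  ring

theorem mul_norm_sq_le_of_smul_add_eq (T : E →ₗ[ℝ] E) {β A : ℝ} (hβ : 0 ≤ β) {x y : E}
    (hcoer : A * ‖x - y‖ ^ 2 ≤ ⟪T (x - y), x - y⟫) (heq : β • x + T x = T y) :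
    (β + A) * ‖x - y‖ ^ 2 ≤ β * (‖y‖ * ‖x - y‖) := by
  have hinner := inner_map_sub_eq_of_smul_add_eq T heq
  have hcs : -⟪y, x - y⟫ ≤ ‖y‖ * ‖x - y‖ := (neg_le_abs _).trans (abs_real_inner_le_norm _ _)
  nlinarith [mul_le_mul_of_nonneg_left hcs hβ]

theorem norm_sub_le_of_smul_add_eq (T : E →ₗ[ℝ] E) {β A : ℝ} (hβ : 0 ≤ β) (hβA : 0 < β + A)
    {x y : E} (hcoer : A * ‖x - y‖ ^ 2 ≤ ⟪T (x - y), x - y⟫) (heq : β • x + T x = T y) :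
    ‖x - y‖ ≤ β / (β + A) * ‖y‖ := by
  have key := mul_norm_sq_le_of_smul_add_eq T hβ hcoer heq
  rcases (norm_nonneg (x - y)).eq_or_lt with h0 | h0
  · rw [← h0]
    positivity
  · have hcancel : (β + A) * ‖x - y‖ ≤ β * ‖y‖ :=
      le_of_mul_le_mul_right (by linear_combination key) h0
    rw [div_mul_eq_mul_div, le_div_iff₀ hβA]
    linarith

end

theorem bias_bound_general
    {N : ℕ} (W : Submodule ℝ (EuclideanSpace ℝ (Fin N)))
    (T : EuclideanSpace ℝ (Fin N) →L[ℝ] EuclideanSpace ℝ (Fin N))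
    (β A : ℝ) (hβ : 0 < β) (hA : 0 ≤ A)
    (hlow : ∀ g ∈ W, A * ‖g‖ ^ 2 ≤ ⟪T g, g⟫)
    (fstar ftil : EuclideanSpace ℝ (Fin N))
    (hfstarW : fstar ∈ W) (hftilW : ftil ∈ W)
    (heq : β • ftil + T ftil = T fstar) :
    ‖ftil - fstar‖ ≤ (β / (β + A)) * ‖fstar‖ :=
  norm_sub_le_of_smul_add_eq T.toLinearMap hβ.le (by linarith)
    (hlow _ (W.sub_mem hftilW hfstarW)) heq

/-- Bias bound: if `β > 0`, `T` maps `W` into `W` with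
`⟪T g, g⟫ ≥ A‖g‖²` on `W` (`A ≥ 0`), `f_* ∈ W`, `f̃ ∈ W` and
`β • f̃ + T f̃ = T f_*`, then `‖f̃ − f_*‖ ≤ (β/(β+A))·‖f_*‖`. -/
theorem bias_bound
    {N : ℕ} (W : Submodule ℝ (EuclideanSpace ℝ (Fin N)))
    (S : Finset (Fin N))
    (T : EuclideanSpace ℝ (Fin N) →L[ℝ] EuclideanSpace ℝ (Fin N))
    (hT : ∀ f : EuclideanSpace ℝ (Fin N), T f =
      ∑ u ∈ S, f u • (W.orthogonalProjectionOnto (EuclideanSpace.single u (1 : ℝ)) :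
        EuclideanSpace ℝ (Fin N)))
    (β A : ℝ) (hβ : 0 < β) (hA : 0 ≤ A)
    (hTW : ∀ g ∈ W, T g ∈ W)
    (hlow : ∀ g ∈ W, A * ‖g‖ ^ 2 ≤ ⟪T g, g⟫)
    (fstar ftil : EuclideanSpace ℝ (Fin N))
    (hfstarW : fstar ∈ W) (hftilW : ftil ∈ W)
    (heq : β • ftil + T ftil = T fstar) :
    ‖ftil - fstar‖ ≤ (β / (β + A)) * ‖fstar‖ :=
  bias_bound_general W T β A hβ hA hlow fstar ftil hfstarW hftilW heq
end

section
/- In the DLSR setup, for every k ∈ ℤ the quantity η^{(k)} satisfies η^{(k)} ≤ √|S| · Σ_{i=0}^{τ̄−1} δ^{(k−i)}, where δ^{(j)} = ‖f^{(j)} − f^{(j−1)}‖ and η^{(k)} = ‖Σ_{u ∈ S} g_u^{(k)}‖ with g_u^{(k)}(v) = (f^{(k)}(u) − f^{(k−τ(u,v))}(u)) · (Pδ_u)(v). -/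
/-!
Telescoping gives `f k u - f (k - τ u v) u = ∑_{i < τ u v} d_i(u)` with `d_i = f (k - i) - f (k - i - 1)`,
so since `τ u v ≤ τ̄` every coefficient of `g_u` is bounded by `a_u = ∑_{i < τ̄} |d_i(u)|`, and
`‖P δ_u‖ ≤ 1` gives `‖g_u‖ ≤ a_u`. Summing over `u ∈ S` and exchanging the sums leaves
`∑_{i < τ̄} ∑_{u ∈ S} |d_i(u)|`, and Cauchy–Schwarz bounds the inner sum by `√|S| ‖d_i‖`.
-/

open Finset

lemma dist_le_sum_range_dist_of_le {α : Type*} [PseudoMetricSpace α] (x : ℤ → α) (k : ℤ)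
    {m n : ℕ} (hmn : m ≤ n) :
    dist (x k) (x (k - m)) ≤ ∑ i ∈ range n, dist (x (k - i)) (x (k - i - 1)) := by
  calc dist (x k) (x (k - m))
      ≤ ∑ i ∈ range m, dist (x (k - i)) (x (k - i - 1)) := by
        simpa [sub_sub] using dist_le_range_sum_dist (fun i : ℕ ↦ x (k - i)) m
    _ ≤ ∑ i ∈ range n, dist (x (k - i)) (x (k - i - 1)) :=
        sum_le_sum_of_subset_of_nonneg (range_subset_range.2 hmn) fun _ _ _ ↦ dist_nonneg

lemma PiLp.norm_le_norm_of_forall_norm_le {ι : Type*} [Fintype ι] {β : ι → Type*}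
    [∀ i, SeminormedAddCommGroup (β i)] {x y : PiLp 2 β} (h : ∀ i, ‖x i‖ ≤ ‖y i‖) :
    ‖x‖ ≤ ‖y‖ := by
  rw [PiLp.norm_eq_of_L2, PiLp.norm_eq_of_L2]
  gcongr with i
  exact h i

lemma EuclideanSpace.sum_single {𝕜 ι : Type*} [RCLike 𝕜] [Fintype ι] [DecidableEq ι]
    (b : ι → 𝕜) : ∑ i, EuclideanSpace.single i (b i) = WithLp.toLp 2 b := by
  ext j
  simp

lemma EuclideanSpace.norm_toLp_mul_le {𝕜 ι : Type*} [RCLike 𝕜] [Fintype ι]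
    (c : ι → 𝕜) (x : EuclideanSpace 𝕜 ι) {a : ℝ} (ha : 0 ≤ a) (hc : ∀ i, ‖c i‖ ≤ a) :
    ‖(WithLp.toLp 2 fun i ↦ c i * x i : EuclideanSpace 𝕜 ι)‖ ≤ a * ‖x‖ := by
  calc ‖(WithLp.toLp 2 fun i ↦ c i * x i : EuclideanSpace 𝕜 ι)‖
      ≤ ‖(a : 𝕜) • x‖ := PiLp.norm_le_norm_of_forall_norm_le fun i ↦ by
        simp only [PiLp.smul_apply, norm_mul, norm_smul, RCLike.norm_ofReal,
          abs_of_nonneg ha]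
        gcongr
        exact hc i
    _ = a * ‖x‖ := by rw [norm_smul, RCLike.norm_ofReal, abs_of_nonneg ha]

lemma EuclideanSpace.sum_norm_apply_le_sqrt_card_mul_norm {𝕜 ι : Type*} [RCLike 𝕜] [Fintype ι]
    (s : Finset ι) (x : EuclideanSpace 𝕜 ι) :
    ∑ i ∈ s, ‖x i‖ ≤ √(#s : ℝ) * ‖x‖ := by
  calc ∑ i ∈ s, ‖x i‖ = ∑ i ∈ s, 1 * ‖x i‖ := by simp
    _ ≤ √(∑ i ∈ s, (1 : ℝ) ^ 2) * √(∑ i ∈ s, ‖x i‖ ^ 2) := Real.sum_mul_le_sqrt_mul_sqrt _ _ _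
    _ ≤ √(#s : ℝ) * ‖x‖ := by
        rw [EuclideanSpace.norm_eq]
        simp only [one_pow, sum_const, nsmul_eq_mul, mul_one]
        gcongr
        exact subset_univ s

lemma Submodule.norm_orthogonalProjectionOnto_single_le {𝕜 ι : Type*} [RCLike 𝕜] [Fintype ι]
    [DecidableEq ι] (W : Submodule 𝕜 (EuclideanSpace 𝕜 ι)) (u : ι) :
    ‖W.orthogonalProjectionOnto (EuclideanSpace.single u (1 : 𝕜))‖ ≤ 1 :=
  (W.norm_orthogonalProjectionOnto_apply_le _).trans (by simp)

/-- In the DLSR setup, for every `k ∈ ℤ`,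
`η^{(k)} ≤ √|S| · Σ_{i=0}^{τ̄−1} δ^{(k−i)}` where `δ^{(j)} = ‖f^{(j)} − f^{(j−1)}‖` and
`η^{(k)} = ‖Σ_{u∈S} g_u^{(k)}‖`, `g_u^{(k)}(v) = (f^{(k)}(u) − f^{(k−τ(u,v))}(u))·(Pδ_u)(v)`. -/
theorem eta_le_sqrt_card_sum_delta
    {N : ℕ} (W : Submodule ℝ (EuclideanSpace ℝ (Fin N)))
    (S : Finset (Fin N)) (τ : Fin N → Fin N → ℕ) (τbar : ℕ)
    (hτ : ∀ u ∈ S, ∀ v : Fin N, 1 ≤ τ u v ∧ τ u v ≤ τbar)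
    (f : ℤ → EuclideanSpace ℝ (Fin N)) (k : ℤ) :
    ‖∑ u ∈ S, ∑ v : Fin N, EuclideanSpace.single v
        ((f k u - f (k - τ u v) u) *
          (W.orthogonalProjectionOnto (EuclideanSpace.single u (1 : ℝ)) :
            EuclideanSpace ℝ (Fin N)) v)‖ ≤
      Real.sqrt (S.card : ℝ) *
        ∑ i ∈ Finset.range τbar, ‖f (k - i) - f (k - i - 1)‖ := by
  set δ : ℕ → EuclideanSpace ℝ (Fin N) := fun i ↦ f (k - i) - f (k - i - 1)
  have hg : ∀ u ∈ S, ‖∑ v : Fin N, EuclideanSpace.single v ((f k u - f (k - τ u v) u) *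
      (W.orthogonalProjectionOnto (EuclideanSpace.single u (1 : ℝ)) :
        EuclideanSpace ℝ (Fin N)) v)‖ ≤ ∑ i ∈ range τbar, ‖δ i u‖ := fun u hu ↦ by
    rw [EuclideanSpace.sum_single]
    refine (EuclideanSpace.norm_toLp_mul_le _ _ (by positivity) fun v ↦ ?_).trans
      (mul_le_of_le_one_right (by positivity) (W.norm_orthogonalProjectionOnto_single_le u))
    simpa [δ, ← Real.dist_eq] using
      dist_le_sum_range_dist_of_le (fun j ↦ f j u) k (hτ u hu v).2
  calc _ ≤ ∑ u ∈ S, ∑ i ∈ range τbar, ‖δ i u‖ := (norm_sum_le _ _).trans (sum_le_sum hg)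
    _ = ∑ i ∈ range τbar, ∑ u ∈ S, ‖δ i u‖ := sum_comm
    _ ≤ ∑ i ∈ range τbar, √(#S : ℝ) * ‖δ i‖ :=
        sum_le_sum fun i _ ↦ EuclideanSpace.sum_norm_apply_le_sqrt_card_mul_norm S (δ i)
    _ = _ := (mul_sum _ _ _).symm
end

section
/- In the DLSR setup with stepsize μ > 0, decay factor β > 0, and true signal f_* : ℤ → E satisfying f_*^{(k)} ∈ W for all k and |f_*^{(k+1)}(u) − f_*^{(k)}(u)| ≤ Δ for all u and k, one has for every k ∈ ℤ: δ^{(k)} := ‖f^{(k)} − f^{(k−1)}‖ ≤ μ·((β + ‖T‖)(e^{(k−1)} + e_+^{(k−1)}) + η^{(k−1)}) + μ·|S|·τ̄·Δ, where ‖T‖ is the operator norm of T. -/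
open scoped RealInnerProductSpace BigOperators

/-!
Subtracting `f^{(k−1)}` from the update and using `β f̃ + T f̃ = T f_*` splits
`f^{(k)} − f^{(k−1)}` into `μ` times three terms: `−(β + T)(f^{(k−1)} − f̃^{(k−1)})`, the delay
error `Σ_u g_u^{(k−1)}` of norm `η^{(k−1)}`, and the drift of the true signal
`Σ_u (f_*^{(k−1−τ)}(u) − f_*^{(k−1)}(u)) ⊙ Pδ_u`. Since `f̃ ∈ W`, the first has norm at most
`(β + ‖T‖)(e + e_+)`; since `‖Pδ_u‖ ≤ 1` and `f_*` moves by at most `Δ` per step, the drift has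
norm at most `|S| τ̄ Δ`.
-/

theorem dist_sub_nat_le_mul {α : Type*} [PseudoMetricSpace α] {a : ℤ → α} {Δ : ℝ}
    (h : ∀ k, dist (a k) (a (k + 1)) ≤ Δ) (j : ℤ) (n : ℕ) :
    dist (a (j - n)) (a j) ≤ n * Δ := by
  have hchain := dist_le_range_sum_of_dist_le (f := fun i : ℕ => a (j - n + i)) n
    (d := fun _ => Δ) fun {i} _ => by simpa [add_assoc] using h (j - n + i)
  simpa using hchain

theorem Submodule.norm_sub_le_of_mem {𝕜 E : Type*} [RCLike 𝕜] [NormedAddCommGroup E]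
    [InnerProductSpace 𝕜 E] (K : Submodule 𝕜 E) [K.HasOrthogonalProjection] {y : E}
    (hy : y ∈ K) (x : E) :
    ‖x - y‖ ≤
      ‖(K.orthogonalProjectionOnto (x - y) : E)‖ + ‖x - (K.orthogonalProjectionOnto x : E)‖ := by
  have hPy : (K.orthogonalProjectionOnto y : E) = y := K.starProjection_eq_self_iff.mpr hy
  have hsplit :
      x - y = (K.orthogonalProjectionOnto (x - y) : E) + (x - K.orthogonalProjectionOnto x) := by
    rw [map_sub, Submodule.coe_sub, hPy]; abel
  calc ‖x - y‖ = _ := congrArg norm hsplit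
    _ ≤ _ := norm_add_le _ _

theorem EuclideanSpace.norm_sum_single_mul_le {ι : Type*} [Fintype ι] [DecidableEq ι]
    (x : EuclideanSpace ℝ ι) {c : ι → ℝ} {b : ℝ} (hb : 0 ≤ b) (hc : ∀ w, |c w| ≤ b) :
    ‖∑ w, EuclideanSpace.single w (c w * x w)‖ ≤ b * ‖x‖ := by
  rw [EuclideanSpace.norm_eq, EuclideanSpace.norm_eq, ← Real.sqrt_sq hb,
    ← Real.sqrt_mul (sq_nonneg b), Finset.mul_sum]
  refine Real.sqrt_le_sqrt (Finset.sum_le_sum fun v _ => ?_)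
  simp only [WithLp.ofLp_sum, Finset.sum_apply, PiLp.single_apply, Finset.sum_ite_eq,
    Finset.mem_univ, if_true, norm_mul, mul_pow, Real.norm_eq_abs, sq_abs]
  gcongr ?_ * _
  exact sq_le_sq.mpr ((hc v).trans (le_abs_self b))

section Sampling

variable {N : ℕ} (W : Submodule ℝ (EuclideanSpace ℝ (Fin N))) (S : Finset (Fin N))

/-- `Σ_{u ∈ S} c(u, ·) ⊙ Pδ_u`, with `⊙` the pointwise product; for
`c u v = f^{(k)}(u) − f^{(k−τ(u,v))}(u)` this is `Σ_{u ∈ S} g_u^{(k)}`. -/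
noncomputable def sampledField (c : Fin N → Fin N → ℝ) : EuclideanSpace ℝ (Fin N) :=
  ∑ u ∈ S, ∑ v : Fin N, EuclideanSpace.single v
    (c u v * (W.orthogonalProjectionOnto (EuclideanSpace.single u (1 : ℝ)) :
      EuclideanSpace ℝ (Fin N)) v)

theorem sampledField_apply (c : Fin N → Fin N → ℝ) (v : Fin N) :
    sampledField W S c v = ∑ u ∈ S, c u v *
      (W.orthogonalProjectionOnto (EuclideanSpace.single u (1 : ℝ)) :
        EuclideanSpace ℝ (Fin N)) v := by
  simp [sampledField]

theorem norm_sampledField_le {c : Fin N → Fin N → ℝ} {b : ℝ}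
    (hc : ∀ u ∈ S, ∀ v, |c u v| ≤ b) :
    ‖sampledField W S c‖ ≤ S.card * b := by
  refine (norm_sum_le _ _).trans ?_
  rw [← nsmul_eq_mul]
  refine Finset.sum_le_card_nsmul _ _ _ fun u hu => ?_
  have hb : 0 ≤ b := (abs_nonneg _).trans (hc u hu u)
  calc _ ≤ b * ‖(W.orthogonalProjectionOnto (EuclideanSpace.single u (1 : ℝ)) :
          EuclideanSpace ℝ (Fin N))‖ :=
        EuclideanSpace.norm_sum_single_mul_le _ hb (hc u hu)
    _ ≤ b * 1 := by
        gcongr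
        simpa using W.norm_orthogonalProjectionOnto_apply_le (EuclideanSpace.single u (1 : ℝ))
    _ = b := mul_one b

theorem sub_eq_smul_of_delayed_step
    {T : EuclideanSpace ℝ (Fin N) →L[ℝ] EuclideanSpace ℝ (Fin N)}
    (hT : ∀ g : EuclideanSpace ℝ (Fin N), T g =
      ∑ u ∈ S, g u • (W.orthogonalProjectionOnto (EuclideanSpace.single u (1 : ℝ)) :
        EuclideanSpace ℝ (Fin N)))
    {μ β : ℝ} {x x' s : EuclideanSpace ℝ (Fin N)} {a b : Fin N → Fin N → ℝ}
    (hstep : ∀ v, x' v = (1 - μ * β) * x v + μ * ∑ u ∈ S, (a u v - b u v) *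
      (W.orthogonalProjectionOnto (EuclideanSpace.single u (1 : ℝ)) :
        EuclideanSpace ℝ (Fin N)) v) :
    x' - x = μ • (T (s - x) - β • x + sampledField W S (fun u v => x u - b u v)
      + sampledField W S (fun u v => a u v - s u)) := by
  ext v
  simp only [PiLp.sub_apply, PiLp.add_apply, PiLp.smul_apply, smul_eq_mul, hT,
    sampledField_apply, hstep, WithLp.ofLp_sum, Finset.sum_apply, sub_mul, Finset.sum_sub_distrib]
  ring

theorem norm_sampledField_drift_le {τ : Fin N → Fin N → ℕ} {τbar : ℕ}
    (hτ : ∀ u ∈ S, ∀ v, τ u v ≤ τbar) {a : ℤ → EuclideanSpace ℝ (Fin N)} {Δ : ℝ}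
    (hΔ : ∀ (k : ℤ) (u : Fin N), |a (k + 1) u - a k u| ≤ Δ) (m : ℤ) :
    ‖sampledField W S (fun u v => a (m - τ u v) u - a m u)‖ ≤ S.card * (τbar * Δ) := by
  refine norm_sampledField_le W S fun u hu v => ?_
  have hΔu : ∀ j, dist (a j u) (a (j + 1) u) ≤ Δ := fun j => by
    simpa [Real.dist_eq, abs_sub_comm] using hΔ j u
  calc |a (m - τ u v) u - a m u| ≤ τ u v * Δ := by
        simpa [Real.dist_eq] using dist_sub_nat_le_mul hΔu m (τ u v)
    _ ≤ τbar * Δ := by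
        gcongr
        · exact (abs_nonneg _).trans (hΔ m u)
        · exact_mod_cast hτ u hu v

end Sampling

theorem DLSR_delta_bound_general
    {N : ℕ} (W : Submodule ℝ (EuclideanSpace ℝ (Fin N)))
    (S : Finset (Fin N)) (τ : Fin N → Fin N → ℕ) (τbar : ℕ)
    (hτ : ∀ u ∈ S, ∀ v : Fin N, 1 ≤ τ u v ∧ τ u v ≤ τbar)
    (T : EuclideanSpace ℝ (Fin N) →L[ℝ] EuclideanSpace ℝ (Fin N))
    (hT : ∀ g : EuclideanSpace ℝ (Fin N), T g =
      ∑ u ∈ S, g u • (Submodule.orthogonalProjectionOnto W (EuclideanSpace.single u (1 : ℝ)) :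
        EuclideanSpace ℝ (Fin N)))
    (μ β Δ : ℝ) (hμ : 0 < μ) (hβ : 0 < β)
    (fstar : ℤ → EuclideanSpace ℝ (Fin N))
    (hΔ : ∀ (k : ℤ) (u : Fin N), |fstar (k + 1) u - fstar k u| ≤ Δ)
    (f : ℤ → EuclideanSpace ℝ (Fin N))
    (hiter : ∀ (k : ℤ) (v : Fin N), f (k + 1) v =
      (1 - μ * β) * f k v +
      μ * ∑ u ∈ S, (fstar (k - τ u v) u - f (k - τ u v) u) *
        (Submodule.orthogonalProjectionOnto W (EuclideanSpace.single u (1 : ℝ)) :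
          EuclideanSpace ℝ (Fin N)) v)
    (ftil : ℤ → EuclideanSpace ℝ (Fin N))
    (hftil : ∀ k : ℤ, ftil k ∈ W ∧ β • ftil k + T (ftil k) = T (fstar k))
    (e ep η : ℤ → ℝ)
    (he : ∀ k : ℤ, e k =
      ‖(Submodule.orthogonalProjectionOnto W (f k - ftil k) : EuclideanSpace ℝ (Fin N))‖)
    (hep : ∀ k : ℤ, ep k =
      ‖f k - (Submodule.orthogonalProjectionOnto W (f k) : EuclideanSpace ℝ (Fin N))‖)
    (hη : ∀ k : ℤ, η k = ‖∑ u ∈ S, ∑ v : Fin N, EuclideanSpace.single v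
      ((f k u - f (k - τ u v) u) *
        (Submodule.orthogonalProjectionOnto W (EuclideanSpace.single u (1 : ℝ)) :
          EuclideanSpace ℝ (Fin N)) v)‖) :
    ∀ k : ℤ, ‖f k - f (k - 1)‖ ≤
      μ * ((β + ‖T‖) * (e (k - 1) + ep (k - 1)) + η (k - 1)) +
        μ * S.card * τbar * Δ := by
  intro k
  obtain ⟨m, rfl⟩ : ∃ m : ℤ, k = m + 1 := ⟨k - 1, by ring⟩
  rw [add_sub_cancel_right]
  set x := f m - ftil m
  have hgrad : T (fstar m - f m) - β • f m = -(β • x + T x) := by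
    rw [map_sub, ← (hftil m).2, map_sub, smul_sub]; abel
  have hx : ‖x‖ ≤ e m + ep m := he m ▸ hep m ▸ W.norm_sub_le_of_mem (hftil m).1 (f m)
  have hTx : ‖β • x + T x‖ ≤ (β + ‖T‖) * ‖x‖ := by
    calc ‖β • x + T x‖ ≤ β * ‖x‖ + ‖T‖ * ‖x‖ := by
          grw [norm_add_le, norm_smul, Real.norm_of_nonneg hβ.le, T.le_opNorm]
      _ = (β + ‖T‖) * ‖x‖ := by ring
  have hdrift := norm_sampledField_drift_le W S (fun u hu v => (hτ u hu v).2) hΔ m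
  have hdelay : ‖sampledField W S (fun u v => f m u - f (m - τ u v) u)‖ = η m := (hη m).symm
  rw [sub_eq_smul_of_delayed_step W S hT (hiter m), hgrad, norm_smul, Real.norm_of_nonneg hμ.le]
  calc μ * ‖-(β • x + T x) + sampledField W S (fun u v => f m u - f (m - τ u v) u) +
        sampledField W S (fun u v => fstar (m - τ u v) u - fstar m u)‖
      ≤ μ * ((β + ‖T‖) * ‖x‖ + η m + S.card * (τbar * Δ)) := by
        grw [norm_add₃_le, norm_neg, hTx, hdelay, hdrift]
    _ ≤ μ * ((β + ‖T‖) * (e m + ep m) + η m + S.card * (τbar * Δ)) := by grw [hx]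
    _ = μ * ((β + ‖T‖) * (e m + ep m) + η m) + μ * S.card * τbar * Δ := by ring

/-- In the DLSR setup, the increment `δ^{(k)} = ‖f^{(k)} − f^{(k−1)}‖`
satisfies `δ^{(k)} ≤ μ((β + ‖T‖)(e^{(k−1)} + e_+^{(k−1)}) + η^{(k−1)}) + μ|S|τ̄Δ`. -/
theorem DLSR_delta_bound
    {N : ℕ} (W : Submodule ℝ (EuclideanSpace ℝ (Fin N)))
    (S : Finset (Fin N)) (τ : Fin N → Fin N → ℕ) (τbar : ℕ)
    (hτ : ∀ u ∈ S, ∀ v : Fin N, 1 ≤ τ u v ∧ τ u v ≤ τbar)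
    (T : EuclideanSpace ℝ (Fin N) →L[ℝ] EuclideanSpace ℝ (Fin N))
    (hT : ∀ g : EuclideanSpace ℝ (Fin N), T g =
      ∑ u ∈ S, g u • (Submodule.orthogonalProjectionOnto W (EuclideanSpace.single u (1 : ℝ)) :
        EuclideanSpace ℝ (Fin N)))
    (hTW : ∀ g ∈ W, T g ∈ W)
    (hTsa : ∀ g ∈ W, ∀ h ∈ W, ⟪T g, h⟫ = ⟪g, T h⟫)
    (hTbnd : ∀ g ∈ W, 0 ≤ ⟪T g, g⟫ ∧ ⟪T g, g⟫ ≤ ‖g‖ ^ 2)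
    (μ β Δ : ℝ) (hμ : 0 < μ) (hβ : 0 < β)
    (fstar : ℤ → EuclideanSpace ℝ (Fin N)) (hfstarW : ∀ k : ℤ, fstar k ∈ W)
    (hΔ : ∀ (k : ℤ) (u : Fin N), |fstar (k + 1) u - fstar k u| ≤ Δ)
    (f : ℤ → EuclideanSpace ℝ (Fin N))
    (hiter : ∀ (k : ℤ) (v : Fin N), f (k + 1) v =
      (1 - μ * β) * f k v +
      μ * ∑ u ∈ S, (fstar (k - τ u v) u - f (k - τ u v) u) *
        (Submodule.orthogonalProjectionOnto W (EuclideanSpace.single u (1 : ℝ)) :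
          EuclideanSpace ℝ (Fin N)) v)
    (ftil : ℤ → EuclideanSpace ℝ (Fin N))
    (hftil : ∀ k : ℤ, ftil k ∈ W ∧ β • ftil k + T (ftil k) = T (fstar k))
    (e ep η : ℤ → ℝ)
    (he : ∀ k : ℤ, e k =
      ‖(Submodule.orthogonalProjectionOnto W (f k - ftil k) : EuclideanSpace ℝ (Fin N))‖)
    (hep : ∀ k : ℤ, ep k =
      ‖f k - (Submodule.orthogonalProjectionOnto W (f k) : EuclideanSpace ℝ (Fin N))‖)
    (hη : ∀ k : ℤ, η k = ‖∑ u ∈ S, ∑ v : Fin N, EuclideanSpace.single v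
      ((f k u - f (k - τ u v) u) *
        (Submodule.orthogonalProjectionOnto W (EuclideanSpace.single u (1 : ℝ)) :
          EuclideanSpace ℝ (Fin N)) v)‖) :
    ∀ k : ℤ, ‖f k - f (k - 1)‖ ≤
      μ * ((β + ‖T‖) * (e (k - 1) + ep (k - 1)) + η (k - 1)) +
        μ * S.card * τbar * Δ :=
  DLSR_delta_bound_general W S τ τbar hτ T hT μ β Δ hμ hβ fstar hΔ f hiter ftil hftil e ep η he hep
    hη
end

section
/- In the DLSR setup with a time-invariant true signal f_* ∈ W (so f_*^{(k)} = f_* for all k), self-adjoint T mapping W into W with A‖g‖² ≤ ⟨Tg,g⟩ ≤ ‖g‖² on W (0 < A ≤ 1), positive constants B_e, B_{e+}, B_η satisfying (β + A)·B_e = (β + ‖T‖)·B_{e+}, C = τ̄·√|S|·((β + ‖T‖)(B_e + B_{e+}) + B_η), stepsize μ < min{1/(β + A), B_η/C, β·B_{e+}/C}, and initial bounds e^{(i)} ≤ B_e, e_+^{(i)} ≤ B_{e+}, η^{(i)} ≤ B_η for all i ≤ τ̄. Then for every k ≥ τ̄: e_+^{(k+1)} ≤ (1 − μβ)·e_+^{(k)}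 + μ²C and e^{(k+1)} ≤ (1 − μβ − μA)·e^{(k)} + μ‖T‖·e_+^{(k)} + μ²C. -/
/-! Write `D k = f^{(k)} - f̃`. Subtracting the fixed-point equation of `f̃` turns the iteration
into the delayed linear recursion `D (k+1) = (1 - μβ) D k - μ T (D k) + μ g k` with
`η^{(k)} = ‖g k‖`. Since `T` maps into `W`, projecting onto `Wᗮ` gives the recursion for `e_+`,
and projecting onto `W` gives the one for `e` as soon as `‖(1 - μβ) h - μ T h‖ ≤ (1 - μβ - μA) ‖h‖`
on `W`, which by `(T - A)² ≤ (‖T‖ - A)(T - A)` on `W` holds when `μ(β + ‖T‖) ≤ 1`.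
Telescoping every delayed difference over the window of length `τ̄` bounds `η^{(k)}` by `μC`
while the errors stayed below `B_e, B_{e+}, B_η` on that window, and the choice of `μ` together
with `(β + A) B_e = (β + ‖T‖) B_{e+}` makes these bounds invariant. If instead `μ(β + ‖T‖) > 1`,
the step-size condition forces `τ̄ √|S| < β`, so the delayed recursion contracts by the factor
`1 - μβ + μ τ̄ √|S| < 1`, and the bounds on the whole past force `D = 0`. -/

open scoped RealInnerProductSpace
open Finset

section InnerProductSpace

variable {E : Type*} [NormedAddCommGroup E] [InnerProductSpace ℝ E] (T : E →L[ℝ] E)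
  {β c μ : ℝ} {D D' g : E}

theorem real_inner_apply_self_le_opNorm_mul_sq (x : E) : ⟪T x, x⟫ ≤ ‖T‖ * ‖x‖ ^ 2 :=
  (real_inner_le_norm _ _).trans <| by
    rw [sq, ← mul_assoc]; exact mul_le_mul_of_nonneg_right (T.le_opNorm x) (norm_nonneg x)

theorem norm_sub_le_of_eq (hD' : D' = (1 - μ * β) • D - μ • T D + μ • g) (hμ : 0 ≤ μ)
    (hβ : 0 ≤ β) : ‖D' - D‖ ≤ μ * ((β + ‖T‖) * ‖D‖ + ‖g‖) := by
  have hdecomp : D' - D = μ • (g - (β • D + T D)) := by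
    rw [hD']; module
  rw [hdecomp, norm_smul_of_nonneg hμ]
  gcongr
  calc ‖g - (β • D + T D)‖ ≤ ‖g‖ + (β * ‖D‖ + ‖T‖ * ‖D‖) := by
        refine (norm_sub_le _ _).trans (add_le_add_right ((norm_add_le _ _).trans ?_) _)
        rw [norm_smul_of_nonneg hβ]
        exact add_le_add_right (T.le_opNorm D) _
    _ = (β + ‖T‖) * ‖D‖ + ‖g‖ := by ring

variable (K : Submodule ℝ E)

theorem inner_apply_sq_le_of_nonneg (hT : ∀ x ∈ K, ∀ y ∈ K, ⟪T x, y⟫ = ⟪x, T y⟫)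
    (hpos : ∀ x ∈ K, 0 ≤ ⟪T x, x⟫) {x y : E} (hx : x ∈ K) (hy : y ∈ K) :
    ⟪T x, y⟫ ^ 2 ≤ ⟪T x, x⟫ * ⟪T y, y⟫ := by
  have hyx : ⟪T y, x⟫ = ⟪T x, y⟫ := by rw [hT y hy x hx, real_inner_comm]
  have hquad : ∀ t : ℝ, 0 ≤ ⟪T y, y⟫ * (t * t) + 2 * ⟪T x, y⟫ * t + ⟪T x, x⟫ := by
    intro t
    have h := hpos (x + t • y) (K.add_mem hx (K.smul_mem t hy))
    simp only [map_add, map_smul, inner_add_left, inner_add_right, real_inner_smul_left,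
      real_inner_smul_right, hyx] at h
    linarith
  have := discrim_le_zero hquad
  rw [discrim] at this
  linarith

theorem norm_apply_sq_le_mul_inner (hTK : ∀ x ∈ K, T x ∈ K)
    (hT : ∀ x ∈ K, ∀ y ∈ K, ⟪T x, y⟫ = ⟪x, T y⟫) (hpos : ∀ x ∈ K, 0 ≤ ⟪T x, x⟫)
    {M : ℝ} (hM : ∀ x ∈ K, ⟪T x, x⟫ ≤ M * ‖x‖ ^ 2) {x : E} (hx : x ∈ K) :
    ‖T x‖ ^ 2 ≤ M * ⟪T x, x⟫ := by
  rcases (norm_nonneg (T x)).eq_or_lt with h0 | h0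
  · simp [norm_eq_zero.mp h0.symm]
  have hcs := inner_apply_sq_le_of_nonneg T K hT hpos hx (hTK x hx)
  rw [real_inner_self_eq_norm_sq] at hcs
  have := mul_le_mul_of_nonneg_left (hM _ (hTK x hx)) (hpos x hx)
  refine le_of_mul_le_mul_right ?_ (pow_pos h0 2)
  linarith

theorem norm_smul_sub_smul_apply_le (hTK : ∀ x ∈ K, T x ∈ K)
    (hT : ∀ x ∈ K, ∀ y ∈ K, ⟪T x, y⟫ = ⟪x, T y⟫) {A L : ℝ}
    (hA : ∀ x ∈ K, A * ‖x‖ ^ 2 ≤ ⟪T x, x⟫) (hL : ∀ x ∈ K, ⟪T x, x⟫ ≤ L * ‖x‖ ^ 2)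
    (hμ : 0 ≤ μ) (hμA : μ * A ≤ c) (hμL : μ * (L + A) ≤ 2 * c) {h : E} (hh : h ∈ K) :
    ‖c • h - μ • T h‖ ≤ (c - μ * A) * ‖h‖ := by
  set S := T - A • ContinuousLinearMap.id ℝ E
  have hS : ∀ x, S x = T x - A • x := fun x => rfl
  have hSx : ∀ x, ⟪S x, x⟫ = ⟪T x, x⟫ - A * ‖x‖ ^ 2 := fun x => by
    rw [hS, inner_sub_left, real_inner_smul_left, real_inner_self_eq_norm_sq]
  have hSS : ‖S h‖ ^ 2 ≤ (L - A) * ⟪S h, h⟫ := by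
    refine norm_apply_sq_le_mul_inner S K (fun x hx => ?_) (fun x hx y hy => ?_)
      (fun x hx => ?_) (fun x hx => ?_) hh
    · exact K.sub_mem (hTK x hx) (K.smul_mem A hx)
    · simp only [hS, inner_sub_left, inner_sub_right, real_inner_smul_left,
        real_inner_smul_right, hT x hx y hy]
    · linarith [hSx x, hA x hx]
    · linarith [hSx x, hL x hx]
  have hdecomp : c • h - μ • T h = (c - μ * A) • h - μ • S h := by
    rw [hS]; module
  have hpos : 0 ≤ ⟪S h, h⟫ := by linarith [hSx h, hA h hh]
  rw [← sq_le_sq₀ (norm_nonneg _) (mul_nonneg (by linarith) (norm_nonneg _)), hdecomp,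
    norm_sub_sq_real, norm_smul, norm_smul, real_inner_smul_left, real_inner_smul_right,
    real_inner_comm, Real.norm_eq_abs, Real.norm_eq_abs, abs_of_nonneg hμ,
    abs_of_nonneg (by linarith : 0 ≤ c - μ * A)]
  nlinarith [mul_le_mul_of_nonneg_left hSS (sq_nonneg μ),
    mul_nonneg (mul_nonneg hμ hpos) (by linarith : 0 ≤ 2 * c - μ * (L + A))]

variable [K.HasOrthogonalProjection]

theorem norm_le_norm_starProjection_add_norm_sub (x : E) :
    ‖x‖ ≤ ‖K.starProjection x‖ + ‖x - K.starProjection x‖ := by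
  simpa using norm_add_le (K.starProjection x) (x - K.starProjection x)

theorem norm_sub_starProjection_le_of_eq (hTK : ∀ x, T x ∈ K)
    (hD' : D' = c • D - μ • T D + μ • g) (hc : 0 ≤ c) (hμ : 0 ≤ μ) :
    ‖D' - K.starProjection D'‖ ≤ c * ‖D - K.starProjection D‖ + μ * ‖g‖ := by
  have hPT : K.starProjection (T D) = T D := K.starProjection_eq_self_iff.mpr (hTK D)
  have hg : ‖g - K.starProjection g‖ ≤ ‖g‖ := by
    simpa using Kᗮ.norm_starProjection_apply_le g
  have hdecomp : D' - K.starProjection D' =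
      c • (D - K.starProjection D) + μ • (g - K.starProjection g) := by
    simp only [hD', map_add, map_sub, map_smul, hPT]
    module
  calc ‖D' - K.starProjection D'‖
      ≤ ‖c • (D - K.starProjection D)‖ + ‖μ • (g - K.starProjection g)‖ := by
        rw [hdecomp]; exact norm_add_le _ _
    _ ≤ c * ‖D - K.starProjection D‖ + μ * ‖g‖ := by
        rw [norm_smul_of_nonneg hc, norm_smul_of_nonneg hμ]
        gcongr

theorem norm_starProjection_le_of_eq (hTK : ∀ x, T x ∈ K)
    (hD' : D' = c • D - μ • T D + μ • g) (hμ : 0 ≤ μ) {ρ : ℝ}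
    (hρ : ‖c • K.starProjection D - μ • T (K.starProjection D)‖ ≤ ρ * ‖K.starProjection D‖) :
    ‖K.starProjection D'‖ ≤
      ρ * ‖K.starProjection D‖ + μ * ‖T‖ * ‖D - K.starProjection D‖ + μ * ‖g‖ := by
  have hPT : K.starProjection (T D) = T D := K.starProjection_eq_self_iff.mpr (hTK D)
  have hdecomp : K.starProjection D' = (c • K.starProjection D - μ • T (K.starProjection D))
      - μ • T (D - K.starProjection D) + μ • K.starProjection g := by
    simp only [hD', map_add, map_sub, map_smul, hPT]
    module
  have hTQ : ‖μ • T (D - K.starProjection D)‖ ≤ μ * ‖T‖ * ‖D - K.starProjection D‖ := by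
    rw [norm_smul_of_nonneg hμ, mul_assoc]
    exact mul_le_mul_of_nonneg_left (T.le_opNorm _) hμ
  have hPg : ‖μ • K.starProjection g‖ ≤ μ * ‖g‖ := by
    rw [norm_smul_of_nonneg hμ]
    exact mul_le_mul_of_nonneg_left (K.norm_starProjection_apply_le g) hμ
  rw [hdecomp]
  linarith [norm_add_le (c • K.starProjection D - μ • T (K.starProjection D)
      - μ • T (D - K.starProjection D)) (μ • K.starProjection g),
    norm_sub_le (c • K.starProjection D - μ • T (K.starProjection D))
      (μ • T (D - K.starProjection D))]

end InnerProductSpace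

namespace EuclideanSpace

variable {ι : Type*} [Fintype ι]

theorem norm_le_norm_of_forall_abs_le {x y : EuclideanSpace ℝ ι} (h : ∀ i, |x i| ≤ |y i|) :
    ‖x‖ ≤ ‖y‖ := by
  rw [EuclideanSpace.norm_eq, EuclideanSpace.norm_eq]
  gcongr with i
  simpa only [Real.norm_eq_abs] using h i

theorem sum_abs_le_sqrt_card_mul_norm (s : Finset ι) (x : EuclideanSpace ℝ ι) :
    ∑ i ∈ s, |x i| ≤ √(#s : ℝ) * ‖x‖ := by
  have hsq : ∑ i ∈ s, |x i| ^ 2 ≤ ‖x‖ ^ 2 := by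
    rw [EuclideanSpace.norm_sq_eq]
    simp only [Real.norm_eq_abs]
    exact sum_le_univ_sum_of_nonneg fun i => sq_nonneg _
  rw [← Real.sqrt_sq (norm_nonneg x), ← Real.sqrt_mul (Nat.cast_nonneg _)]
  refine Real.le_sqrt_of_sq_le ?_
  calc (∑ i ∈ s, |x i|) ^ 2 ≤ #s * ∑ i ∈ s, |x i| ^ 2 := sq_sum_le_card_mul_sum_sq
    _ ≤ #s * ‖x‖ ^ 2 := by gcongr

theorem norm_toLp_sum_mul_le {κ : Type*} (s : Finset ι) (a : ι → ι → ℝ)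
    (p : ι → EuclideanSpace ℝ ι) (hp : ∀ u ∈ s, ‖p u‖ ≤ 1) (I : Finset κ)
    (y : κ → EuclideanSpace ℝ ι) (ha : ∀ u ∈ s, ∀ v, |a u v| ≤ ∑ i ∈ I, |y i u|) :
    ‖WithLp.toLp 2 (fun v => ∑ u ∈ s, a u v * p u v)‖ ≤ √(#s : ℝ) * ∑ i ∈ I, ‖y i‖ := by
  set b : ι → ℝ := fun u => ∑ i ∈ I, |y i u|
  have hb : ∀ u, 0 ≤ b u := fun u => sum_nonneg fun i _ => abs_nonneg _
  have hterm : ∀ u ∈ s, ‖WithLp.toLp 2 (fun v => a u v * p u v)‖ ≤ b u := by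
    intro u hu
    calc ‖WithLp.toLp 2 (fun v => a u v * p u v)‖ ≤ ‖b u • p u‖ := by
          refine norm_le_norm_of_forall_abs_le fun v => ?_
          simp only [PiLp.smul_apply, smul_eq_mul, abs_mul, abs_of_nonneg (hb u)]
          exact mul_le_mul_of_nonneg_right (ha u hu v) (abs_nonneg _)
      _ ≤ b u := by
          rw [norm_smul_of_nonneg (hb u)]
          exact mul_le_of_le_one_right (hb u) (hp u hu)
  calc ‖WithLp.toLp 2 (fun v => ∑ u ∈ s, a u v * p u v)‖
      = ‖∑ u ∈ s, WithLp.toLp 2 (fun v => a u v * p u v)‖ := by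
        congr 1; ext v; simp [WithLp.ofLp_sum]
    _ ≤ ∑ u ∈ s, b u := (norm_sum_le _ _).trans (sum_le_sum hterm)
    _ = ∑ i ∈ I, ∑ u ∈ s, |y i u| := sum_comm
    _ ≤ ∑ i ∈ I, √(#s : ℝ) * ‖y i‖ := sum_le_sum fun i _ => sum_abs_le_sqrt_card_mul_norm s (y i)
    _ = √(#s : ℝ) * ∑ i ∈ I, ‖y i‖ := (mul_sum _ _ _).symm

theorem norm_starProjection_single_le [DecidableEq ι] (K : Submodule ℝ (EuclideanSpace ℝ ι))
    [K.HasOrthogonalProjection] (u : ι) :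
    ‖K.starProjection (EuclideanSpace.single u (1 : ℝ))‖ ≤ 1 :=
  (K.norm_starProjection_apply_le _).trans (by simp)

end EuclideanSpace

namespace DLSR

variable {N : ℕ} (W : Submodule ℝ (EuclideanSpace ℝ (Fin N))) (S : Finset (Fin N))
  (τ : Fin N → Fin N → ℕ)

noncomputable def delayedFeedback (x : ℤ → EuclideanSpace ℝ (Fin N)) (k : ℤ) :
    EuclideanSpace ℝ (Fin N) :=
  WithLp.toLp 2 fun v => ∑ u ∈ S, x (k - τ u v) u * W.starProjection (EuclideanSpace.single u 1) v

variable {W S τ}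

theorem delayedFeedback_const {T : EuclideanSpace ℝ (Fin N) →L[ℝ] EuclideanSpace ℝ (Fin N)}
    (hT : ∀ g, T g = ∑ u ∈ S, g u • W.starProjection (EuclideanSpace.single u 1))
    (x : EuclideanSpace ℝ (Fin N)) (k : ℤ) :
    delayedFeedback W S τ (fun _ => x) k = T x := by
  ext v
  simp [delayedFeedback, hT, WithLp.ofLp_sum]

theorem delayedFeedback_sub (x y : ℤ → EuclideanSpace ℝ (Fin N)) (k : ℤ) :
    delayedFeedback W S τ (x - y) k = delayedFeedback W S τ x k - delayedFeedback W S τ y k := by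
  ext v
  simp [delayedFeedback, sub_mul]

theorem norm_delayedFeedback_le {τbar : ℕ} (hτ : ∀ u ∈ S, ∀ v, 1 ≤ τ u v ∧ τ u v ≤ τbar)
    (x : ℤ → EuclideanSpace ℝ (Fin N)) (k : ℤ) :
    ‖delayedFeedback W S τ x k‖ ≤ √(#S : ℝ) * ∑ i ∈ range τbar, ‖x (k - τbar + i)‖ := by
  refine EuclideanSpace.norm_toLp_sum_mul_le S _ _
    (fun u _ => EuclideanSpace.norm_starProjection_single_le W u) _ _ fun u hu v => ?_
  obtain ⟨h1, h2⟩ := hτ u hu v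
  have hmem : τbar - τ u v ∈ range τbar := mem_range.mpr (by omega)
  have hidx : k - τbar + ((τbar - τ u v : ℕ) : ℤ) = k - τ u v := by push_cast [h2]; ring
  simpa only [hidx] using single_le_sum (f := fun i : ℕ => |x (k - τbar + i) u|)
    (fun _ _ => abs_nonneg _) hmem

theorem norm_delayedFeedback_sub_le {τbar : ℕ} (hτ : ∀ u ∈ S, ∀ v, τ u v ≤ τbar)
    (x : ℤ → EuclideanSpace ℝ (Fin N)) (k : ℤ) :
    ‖delayedFeedback W S τ (fun i => x k - x i) k‖ ≤
      √(#S : ℝ) * ∑ i ∈ range τbar, ‖x (k - τbar + (i + 1 : ℕ)) - x (k - τbar + i)‖ := by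
  refine EuclideanSpace.norm_toLp_sum_mul_le S _ _
    (fun u _ => EuclideanSpace.norm_starProjection_single_le W u) _ _ fun u hu v => ?_
  have h2 := hτ u hu v
  set F : ℕ → ℝ := fun i => x (k - τbar + i) u
  have htele : (x k - x (k - τ u v)) u = ∑ i ∈ Ico (τbar - τ u v) τbar, (F (i + 1) - F i) := by
    rw [sum_Ico_sub F (Nat.sub_le _ _)]
    simp only [F, PiLp.sub_apply]
    push_cast [h2]
    ring_nf
  rw [htele]
  refine (abs_sum_le_sum_abs _ _).trans (sum_le_sum_of_subset_of_nonneg ?_ fun _ _ _ => ?_)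
  · rw [range_eq_Ico]; exact Ico_subset_Ico (Nat.zero_le _) le_rfl
  · positivity

theorem delayedFeedback_sub_left {T : EuclideanSpace ℝ (Fin N) →L[ℝ] EuclideanSpace ℝ (Fin N)}
    (hT : ∀ g, T g = ∑ u ∈ S, g u • W.starProjection (EuclideanSpace.single u 1))
    (x : ℤ → EuclideanSpace ℝ (Fin N)) (k : ℤ) :
    delayedFeedback W S τ (fun i => x k - x i) k = T (x k) - delayedFeedback W S τ x k := by
  rw [← delayedFeedback_const hT (x k) k, ← delayedFeedback_sub]
  rfl

theorem error_recursion {T : EuclideanSpace ℝ (Fin N) →L[ℝ] EuclideanSpace ℝ (Fin N)}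
    (hT : ∀ g, T g = ∑ u ∈ S, g u • W.starProjection (EuclideanSpace.single u 1))
    {μ β : ℝ} {fstar ftil : EuclideanSpace ℝ (Fin N)} {f : ℤ → EuclideanSpace ℝ (Fin N)}
    (hiter : ∀ (k : ℤ) (v : Fin N), f (k + 1) v = (1 - μ * β) * f k v +
      μ * ∑ u ∈ S, (fstar u - f (k - τ u v) u) * W.starProjection (EuclideanSpace.single u 1) v)
    (hftil : β • ftil + T ftil = T fstar) (k : ℤ) :
    f (k + 1) - ftil =
      (1 - μ * β) • (f k - ftil) - μ • delayedFeedback W S τ (fun i => f i - ftil) k := by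
  have hf : f (k + 1) = (1 - μ * β) • f k + μ • (T fstar - delayedFeedback W S τ f k) := by
    rw [← delayedFeedback_const hT fstar k, ← delayedFeedback_sub]
    ext v
    simp [delayedFeedback, hiter, sub_mul]
  have hD : delayedFeedback W S τ (fun i => f i - ftil) k =
      delayedFeedback W S τ f k - T ftil := by
    rw [← delayedFeedback_const hT ftil k, ← delayedFeedback_sub]
    rfl
  rw [hf, hD, ← hftil]
  module

theorem norm_delayedFeedback_sub_le_of_forall_lt {τbar : ℕ} (hτ : ∀ u ∈ S, ∀ v, τ u v ≤ τbar)
    {T : EuclideanSpace ℝ (Fin N) →L[ℝ] EuclideanSpace ℝ (Fin N)} {μ β R Bη : ℝ}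
    (hμ : 0 ≤ μ) (hβ : 0 ≤ β) {D : ℤ → EuclideanSpace ℝ (Fin N)}
    (hrec : ∀ k, D (k + 1) = (1 - μ * β) • D k - μ • T (D k) +
      μ • delayedFeedback W S τ (fun i => D k - D i) k)
    {k : ℤ} (hbd : ∀ i < k, ‖D i‖ ≤ R ∧ ‖delayedFeedback W S τ (fun j => D i - D j) i‖ ≤ Bη) :
    ‖delayedFeedback W S τ (fun i => D k - D i) k‖ ≤
      τbar * √(#S : ℝ) * (μ * ((β + ‖T‖) * R + Bη)) := by
  have hstep : ∀ i ∈ range τbar, ‖D (k - τbar + (i + 1 : ℕ)) - D (k - τbar + i)‖ ≤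
      μ * ((β + ‖T‖) * R + Bη) := by
    intro i hi
    have hik : k - τbar + i < k := by have := mem_range.mp hi; omega
    obtain ⟨hR, hη⟩ := hbd _ hik
    rw [show k - τbar + ((i + 1 : ℕ) : ℤ) = k - τbar + i + 1 by push_cast; ring]
    refine (norm_sub_le_of_eq T (hrec _) hμ hβ).trans ?_
    gcongr
  calc ‖delayedFeedback W S τ (fun i => D k - D i) k‖
      ≤ √(#S : ℝ) * ∑ i ∈ range τbar, ‖D (k - τbar + (i + 1 : ℕ)) - D (k - τbar + i)‖ :=
        norm_delayedFeedback_sub_le hτ D k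
    _ ≤ √(#S : ℝ) * (τbar * (μ * ((β + ‖T‖) * R + Bη))) := by
        gcongr
        simpa using sum_le_card_nsmul _ _ _ hstep
    _ = τbar * √(#S : ℝ) * (μ * ((β + ‖T‖) * R + Bη)) := by ring

theorem eq_zero_of_contraction {τbar : ℕ} (hτ : ∀ u ∈ S, ∀ v, 1 ≤ τ u v ∧ τ u v ≤ τbar)
    {c μ : ℝ} {x : ℤ → EuclideanSpace ℝ (Fin N)}
    (hx : ∀ k, x (k + 1) = c • x k - μ • delayedFeedback W S τ x k) (hc : 0 ≤ c) (hμ : 0 ≤ μ)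
    (hθ : c + μ * (τbar * √(#S : ℝ)) < 1) {m : ℤ} {B : ℝ} (hB : ∀ i ≤ m, ‖x i‖ ≤ B) :
    x = 0 := by
  set θ := c + μ * (τbar * √(#S : ℝ))
  have hdecay : ∀ n : ℕ, ∀ i ≤ m + n, ‖x i‖ ≤ θ ^ n * B := by
    intro n
    induction n with
    | zero => simpa using hB
    | succ n ih =>
      intro i hi
      have hwin : ∑ j ∈ range τbar, ‖x (i - 1 - τbar + j)‖ ≤ τbar * (θ ^ n * B) := by
        simpa using sum_le_card_nsmul (range τbar) _ _ fun j hj =>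
          ih (i - 1 - τbar + j) (by have := mem_range.mp hj; push_cast at hi; omega)
      have hfb : ‖delayedFeedback W S τ x (i - 1)‖ ≤ √(#S : ℝ) * (τbar * (θ ^ n * B)) :=
        (norm_delayedFeedback_le hτ x (i - 1)).trans
          (mul_le_mul_of_nonneg_left hwin (Real.sqrt_nonneg _))
      have hprev := ih (i - 1) (by push_cast at hi; omega)
      rw [← sub_add_cancel i 1, hx]
      calc ‖c • x (i - 1) - μ • delayedFeedback W S τ x (i - 1)‖
          ≤ c * ‖x (i - 1)‖ + μ * ‖delayedFeedback W S τ x (i - 1)‖ := by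
            refine (norm_sub_le _ _).trans_eq ?_
            rw [norm_smul_of_nonneg hc, norm_smul_of_nonneg hμ]
        _ ≤ c * (θ ^ n * B) + μ * (√(#S : ℝ) * (τbar * (θ ^ n * B))) := by gcongr
        _ = θ ^ (n + 1) * B := by ring
  have hθ0 : 0 ≤ θ := by positivity
  have hlim : Filter.Tendsto (fun n : ℕ => θ ^ n * B) Filter.atTop (nhds 0) := by
    simpa using (tendsto_pow_atTop_nhds_zero_of_lt_one hθ0 hθ).mul_const B
  funext j
  refine norm_le_zero_iff.mp (ge_of_tendsto hlim (Filter.eventually_atTop.2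
    ⟨(j - m).toNat, fun n hn => hdecay n j (by omega)⟩))

theorem eta_le_of_error_recursions {e ep η : ℤ → ℝ} {μ β A L C Be Bep Bη : ℝ} {m : ℤ}
    (hep : ∀ k, ep (k + 1) ≤ (1 - μ * β) * ep k + μ * η k)
    (he : ∀ k, e (k + 1) ≤ (1 - μ * β - μ * A) * e k + μ * L * ep k + μ * η k)
    (hη : ∀ k, (∀ i < k, e i ≤ Be ∧ ep i ≤ Bep ∧ η i ≤ Bη) → η k ≤ μ * C)
    (hμ : 0 ≤ μ) (hA : 0 ≤ A) (hL : 0 ≤ L) (hc : 0 ≤ 1 - μ * β - μ * A)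
    (hrel : (β + A) * Be = (β + L) * Bep) (hCη : μ * C ≤ Bη) (hCβ : μ * C ≤ β * Bep)
    (hinit : ∀ i ≤ m, e i ≤ Be ∧ ep i ≤ Bep ∧ η i ≤ Bη) (k : ℤ) :
    η k ≤ μ * C := by
  have hbounds : ∀ k, e k ≤ Be ∧ ep k ≤ Bep ∧ η k ≤ Bη := by
    intro k
    induction k using Int.strongRec (m := m + 1) with
    | lt i hi => exact hinit i (by omega)
    | ge k _ ih =>
      obtain ⟨he', hep', hη'⟩ := ih (k - 1) (by omega)
      have hηC := hη (k - 1) fun i hi => ih i (by omega)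
      have hek := he (k - 1)
      have hepk := hep (k - 1)
      rw [sub_add_cancel] at hek hepk
      have hμη : μ * η (k - 1) ≤ μ * (β * Bep) := mul_le_mul_of_nonneg_left (hηC.trans hCβ) hμ
      refine ⟨?_, ?_, (hη k ih).trans hCη⟩
      · nlinarith [mul_le_mul_of_nonneg_left he' hc,
          mul_le_mul_of_nonneg_left hep' (mul_nonneg hμ hL)]
      · nlinarith [mul_le_mul_of_nonneg_left hep' (by nlinarith : 0 ≤ 1 - μ * β)]
  exact hη k fun i _ => hbounds i

theorem eq_zero_of_one_lt_mul_add {τbar : ℕ} (hτ : ∀ u ∈ S, ∀ v, 1 ≤ τ u v ∧ τ u v ≤ τbar)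
    {μ β L Be Bep Bη : ℝ} {x : ℤ → EuclideanSpace ℝ (Fin N)}
    (hx : ∀ k, x (k + 1) = (1 - μ * β) • x k - μ • delayedFeedback W S τ x k)
    (hμ : 0 < μ) (hβ : 0 ≤ β) (hμβ : μ * β ≤ 1) (hL : 1 < μ * (β + L))
    (hBe : 0 ≤ Be) (hBep : 0 ≤ Bep) (hBη : 0 ≤ Bη)
    (hμC : μ * (τbar * √(#S : ℝ) * ((β + L) * (Be + Bep) + Bη)) < β * Bep)
    {m : ℤ} (hB : ∀ i ≤ m, ‖x i‖ ≤ Be + Bep) : x = 0 := by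
  have hs : 0 ≤ (τbar : ℝ) * √(#S : ℝ) := by positivity
  have hsβ : τbar * √(#S : ℝ) < β := by
    refine lt_of_mul_lt_mul_right (a := Be + Bep) ?_ (by positivity)
    nlinarith [mul_nonneg (mul_nonneg hμ.le hs) hBη, mul_nonneg hβ hBe,
      mul_nonneg (sub_nonneg.mpr hL.le) (mul_nonneg hs (add_nonneg hBe hBep))]
  exact eq_zero_of_contraction hτ hx (by linarith) hμ.le (by nlinarith) hB

end DLSR

theorem DLSR_time_invariant_error_recursions_general
    {N : ℕ} (W : Submodule ℝ (EuclideanSpace ℝ (Fin N)))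
    (S : Finset (Fin N)) (τ : Fin N → Fin N → ℕ) (τbar : ℕ)
    (hτ : ∀ u ∈ S, ∀ v : Fin N, 1 ≤ τ u v ∧ τ u v ≤ τbar)
    (T : EuclideanSpace ℝ (Fin N) →L[ℝ] EuclideanSpace ℝ (Fin N))
    (hT : ∀ g : EuclideanSpace ℝ (Fin N), T g =
      ∑ u ∈ S, g u • (W.orthogonalProjectionOnto (EuclideanSpace.single u (1 : ℝ)) :
        EuclideanSpace ℝ (Fin N)))
    (hTsa : ∀ g ∈ W, ∀ h ∈ W, ⟪T g, h⟫ = ⟪g, T h⟫)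
    (A : ℝ) (hA : 0 < A)
    (hTbnd : ∀ g ∈ W, A * ‖g‖ ^ 2 ≤ ⟪T g, g⟫ ∧ ⟪T g, g⟫ ≤ ‖g‖ ^ 2)
    (μ β : ℝ) (hμ : 0 < μ) (hβ : 0 < β)
    (fstar : EuclideanSpace ℝ (Fin N))
    (f : ℤ → EuclideanSpace ℝ (Fin N))
    (hiter : ∀ (k : ℤ) (v : Fin N), f (k + 1) v =
      (1 - μ * β) * f k v +
      μ * ∑ u ∈ S, (fstar u - f (k - τ u v) u) *
        (W.orthogonalProjectionOnto (EuclideanSpace.single u (1 : ℝ)) :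
          EuclideanSpace ℝ (Fin N)) v)
    (ftil : EuclideanSpace ℝ (Fin N))
    (hftilW : ftil ∈ W) (hftil : β • ftil + T ftil = T fstar)
    (e ep η : ℤ → ℝ)
    (he : ∀ k : ℤ, e k =
      ‖(W.orthogonalProjectionOnto (f k - ftil) : EuclideanSpace ℝ (Fin N))‖)
    (hep : ∀ k : ℤ, ep k =
      ‖f k - (W.orthogonalProjectionOnto (f k) : EuclideanSpace ℝ (Fin N))‖)
    (hη : ∀ k : ℤ, η k = ‖∑ u ∈ S, ∑ v : Fin N, EuclideanSpace.single v
      ((f k u - f (k - τ u v) u) *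
        (W.orthogonalProjectionOnto (EuclideanSpace.single u (1 : ℝ)) :
          EuclideanSpace ℝ (Fin N)) v)‖)
    (Be Bep Bη C : ℝ) (hBe : 0 < Be) (hBep : 0 < Bep) (hBη : 0 < Bη)
    (hrel : (β + A) * Be = (β + ‖T‖) * Bep)
    (hC : C = τbar * Real.sqrt (S.card : ℝ) * ((β + ‖T‖) * (Be + Bep) + Bη))
    (hμlt : μ < min (1 / (β + A)) (min (Bη / C) (β * Bep / C)))
    (hinit : ∀ i : ℤ, i ≤ (τbar : ℤ) → e i ≤ Be ∧ ep i ≤ Bep ∧ η i ≤ Bη) :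
    ∀ k : ℤ, (τbar : ℤ) ≤ k →
      ep (k + 1) ≤ (1 - μ * β) * ep k + μ ^ 2 * C ∧
      e (k + 1) ≤ (1 - μ * β - μ * A) * e k + μ * ‖T‖ * ep k + μ ^ 2 * C := by
  set D : ℤ → EuclideanSpace ℝ (Fin N) := fun k => f k - ftil
  have hTW : ∀ x, T x ∈ W := fun x => by
    rw [hT x]; exact W.sum_mem fun u _ => W.smul_mem _ (SetLike.coe_mem _)
  have hrec₀ : ∀ k, D (k + 1) = (1 - μ * β) • D k - μ • DLSR.delayedFeedback W S τ D k :=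
    DLSR.error_recursion hT hiter hftil
  have hrec : ∀ k, D (k + 1) = (1 - μ * β) • D k - μ • T (D k) +
      μ • DLSR.delayedFeedback W S τ (fun i => D k - D i) k := fun k => by
    rw [hrec₀, DLSR.delayedFeedback_sub_left hT]; module
  have he' : ∀ k, e k = ‖W.starProjection (D k)‖ := he
  have hep' : ∀ k, ep k = ‖D k - W.starProjection (D k)‖ := fun k => by
    simp [hep, D, W.starProjection_eq_self_iff.mpr hftilW]
  have hη' : ∀ k, η k = ‖DLSR.delayedFeedback W S τ (fun i => D k - D i) k‖ := fun k => by
    rw [hη]; congr 1; ext v; simp [DLSR.delayedFeedback, D, WithLp.ofLp_sum]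
  have hDle : ∀ k, ‖D k‖ ≤ e k + ep k := fun k => by
    rw [he', hep']; exact norm_le_norm_starProjection_add_norm_sub W (D k)
  obtain ⟨hμA, hμη, hμβ⟩ := (lt_min_iff.mp hμlt).imp_right lt_min_iff.mp
  have hC0 : 0 < C := (div_pos_iff_of_pos_left hBη).mp (hμ.trans hμη)
  rw [lt_div_iff₀ (by linarith)] at hμA
  rw [lt_div_iff₀ hC0] at hμη hμβ
  have hLep : ∀ k, ep (k + 1) ≤ (1 - μ * β) * ep k + μ * η k := fun k => by
    rw [hep', hep', hη']
    exact norm_sub_starProjection_le_of_eq T W hTW (hrec k) (by nlinarith) hμ.le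
  have hLe : ∀ k, e (k + 1) ≤ (1 - μ * β - μ * A) * e k + μ * ‖T‖ * ep k + μ * η k := by
    by_cases hcase : μ * (β + ‖T‖) ≤ 1
    · intro k
      rw [he', he', hep', hη']
      exact norm_starProjection_le_of_eq T W hTW (hrec k) hμ.le
        (norm_smul_sub_smul_apply_le T W (fun x _ => hTW x) hTsa (fun x hx => (hTbnd x hx).1)
          (fun x _ => real_inner_apply_self_le_opNorm_mul_sq T x) hμ.le (by nlinarith)
          (by nlinarith) (W.starProjection_apply_mem _))
    · rw [hC] at hμβ
      have hD0 : D = 0 := DLSR.eq_zero_of_one_lt_mul_add hτ hrec₀ hμ hβ.le (by nlinarith)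
        (not_le.mp hcase) hBe.le hBep.le hBη.le hμβ
        fun i hi => (hDle i).trans (add_le_add (hinit i hi).1 (hinit i hi).2.1)
      intro k
      simp [he', hep', hη', hD0, DLSR.delayedFeedback]
      positivity
  have hwindow : ∀ k, (∀ i < k, e i ≤ Be ∧ ep i ≤ Bep ∧ η i ≤ Bη) → η k ≤ μ * C :=
    fun k hk => by
      rw [hη', hC]
      refine (DLSR.norm_delayedFeedback_sub_le_of_forall_lt (fun u hu v => (hτ u hu v).2)
        hμ.le hβ.le hrec fun i hi => ⟨(hDle i).trans (add_le_add (hk i hi).1 (hk i hi).2.1),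
          hη' i ▸ (hk i hi).2.2⟩).trans_eq (by ring)
  have hηC : ∀ k, η k ≤ μ * C := DLSR.eta_le_of_error_recursions hLep hLe hwindow hμ.le hA.le
    (norm_nonneg T) (by nlinarith) hrel hμη.le hμβ.le hinit
  intro k _
  exact ⟨by nlinarith [hLep k, hηC k], by nlinarith [hLe k, hηC k]⟩

/-- Corollary 1: DLSR with a time-invariant true signal `f_* ∈ W`:
for `μ < min{1/(β+A), B_η/C, βB_{e+}/C}` and bounded initial errors, the recursions
`e_+^{(k+1)} ≤ (1−μβ)e_+^{(k)} + μ²C` and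
`e^{(k+1)} ≤ (1−μβ−μA)e^{(k)} + μ‖T‖e_+^{(k)} + μ²C` hold for `k ≥ τ̄`. -/
theorem DLSR_time_invariant_error_recursions
    {N : ℕ} (W : Submodule ℝ (EuclideanSpace ℝ (Fin N)))
    (S : Finset (Fin N)) (τ : Fin N → Fin N → ℕ) (τbar : ℕ)
    (hτ : ∀ u ∈ S, ∀ v : Fin N, 1 ≤ τ u v ∧ τ u v ≤ τbar)
    (T : EuclideanSpace ℝ (Fin N) →L[ℝ] EuclideanSpace ℝ (Fin N))
    (hT : ∀ g : EuclideanSpace ℝ (Fin N), T g =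
      ∑ u ∈ S, g u • (W.orthogonalProjectionOnto (EuclideanSpace.single u (1 : ℝ)) :
        EuclideanSpace ℝ (Fin N)))
    (hTW : ∀ g ∈ W, T g ∈ W)
    (hTsa : ∀ g ∈ W, ∀ h ∈ W, ⟪T g, h⟫ = ⟪g, T h⟫)
    (A : ℝ) (hA : 0 < A) (hA1 : A ≤ 1)
    (hTbnd : ∀ g ∈ W, A * ‖g‖ ^ 2 ≤ ⟪T g, g⟫ ∧ ⟪T g, g⟫ ≤ ‖g‖ ^ 2)
    (μ β : ℝ) (hμ : 0 < μ) (hβ : 0 < β)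
    (fstar : EuclideanSpace ℝ (Fin N)) (hfstarW : fstar ∈ W)
    (f : ℤ → EuclideanSpace ℝ (Fin N))
    (hiter : ∀ (k : ℤ) (v : Fin N), f (k + 1) v =
      (1 - μ * β) * f k v +
      μ * ∑ u ∈ S, (fstar u - f (k - τ u v) u) *
        (W.orthogonalProjectionOnto (EuclideanSpace.single u (1 : ℝ)) :
          EuclideanSpace ℝ (Fin N)) v)
    (ftil : EuclideanSpace ℝ (Fin N))
    (hftilW : ftil ∈ W) (hftil : β • ftil + T ftil = T fstar)
    (e ep η : ℤ → ℝ)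
    (he : ∀ k : ℤ, e k =
      ‖(W.orthogonalProjectionOnto (f k - ftil) : EuclideanSpace ℝ (Fin N))‖)
    (hep : ∀ k : ℤ, ep k =
      ‖f k - (W.orthogonalProjectionOnto (f k) : EuclideanSpace ℝ (Fin N))‖)
    (hη : ∀ k : ℤ, η k = ‖∑ u ∈ S, ∑ v : Fin N, EuclideanSpace.single v
      ((f k u - f (k - τ u v) u) *
        (W.orthogonalProjectionOnto (EuclideanSpace.single u (1 : ℝ)) :
          EuclideanSpace ℝ (Fin N)) v)‖)
    (Be Bep Bη C : ℝ) (hBe : 0 < Be) (hBep : 0 < Bep) (hBη : 0 < Bη)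
    (hrel : (β + A) * Be = (β + ‖T‖) * Bep)
    (hC : C = τbar * Real.sqrt (S.card : ℝ) * ((β + ‖T‖) * (Be + Bep) + Bη))
    (hμlt : μ < min (1 / (β + A)) (min (Bη / C) (β * Bep / C)))
    (hinit : ∀ i : ℤ, i ≤ (τbar : ℤ) → e i ≤ Be ∧ ep i ≤ Bep ∧ η i ≤ Bη) :
    ∀ k : ℤ, (τbar : ℤ) ≤ k →
      ep (k + 1) ≤ (1 - μ * β) * ep k + μ ^ 2 * C ∧
      e (k + 1) ≤ (1 - μ * β - μ * A) * e k + μ * ‖T‖ * ep k + μ ^ 2 * C :=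
  DLSR_time_invariant_error_recursions_general W S τ τbar hτ T hT hTsa A hA hTbnd μ β hμ hβ fstar f
    hiter ftil hftilW hftil e ep η he hep hη Be Bep Bη C hBe hBep hBη hrel hC hμlt hinit
end

section
/- Let (a_k) and (b_k) be sequences of nonnegative real numbers, and let μ, β, A, t, c, c' be nonnegative reals with 0 < μβ ≤ μ(β + A) < 1. Suppose that for all sufficiently large k: a_{k+1} ≤ (1 − μβ)·a_k + c and b_{k+1} ≤ (1 − μβ − μA)·b_k + μ·t·a_k + c'. Then limsup_{k→∞} a_k ≤ c/(μβ) and limsup_{k→∞} b_k ≤ (t·c/β + c')/(μ(β + A)). In particular, applied with c = c' = μ²C + M·Δ and t = ‖T‖, this yields limsup a_k ≤ (C/β)μ + (M/(βμ))Δ and limsup b_k ≤ (1 + ‖T‖/β)·(C/(β+A)·μ + M/((β+A)μ)·Δ). -/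
open Filter

lemma helper_le_of_eps {x y k : ℝ} (hk : 0 ≤ k) (h : ∀ ε > 0, x ≤ y + k * ε) : x ≤ y := by
  refine le_of_forall_pos_le_add fun ε hε => ?_
  have h1 := h (ε / (k + 1)) (by positivity)
  have h2 : k / (k + 1) ≤ 1 := by
    rw [div_le_one (by positivity)]; linarith
  have h3 : k * (ε / (k + 1)) ≤ ε := by
    calc k * (ε / (k + 1)) = (k / (k + 1)) * ε := by ring
    _ ≤ 1 * ε := mul_le_mul_of_nonneg_right h2 hε.le
    _ = ε := one_mul ε
  linarith

lemma bdd_of_contraction (x : ℕ → ℝ) (r d : ℝ) (hr0 : 0 ≤ r) (hr1 : r < 1) (hd : 0 ≤ d)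
    (K : ℕ) (hrec : ∀ k, K ≤ k → x (k + 1) ≤ r * x k + d) :
    Filter.IsBoundedUnder (· ≤ ·) Filter.atTop x := by
  set B := max (x K) (d / (1 - r)) with hB
  have hdb : d / (1 - r) ≤ B := le_max_right _ _
  have hbd : ∀ k, K ≤ k → x k ≤ B := by
    intro k hk
    induction k, hk using Nat.le_induction with
    | base => exact le_max_left _ _
    | succ n hn ih =>
      have := hrec n hn
      have h2 : r * x n ≤ r * B := mul_le_mul_of_nonneg_left ih hr0
      have h3 : d ≤ (1 - r) * B := by
        rw [div_le_iff₀ (by linarith : (0:ℝ) < 1 - r)] at hdb; linarith [hdb]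
      nlinarith
  exact ⟨B, eventually_map.mpr (eventually_atTop.mpr ⟨K, hbd⟩)⟩

lemma limsup_of_contraction (x : ℕ → ℝ) (hx : ∀ k, 0 ≤ x k) (r d : ℝ)
    (hr0 : 0 ≤ r) (hr1 : r < 1) (hd : 0 ≤ d)
    (K : ℕ) (hrec : ∀ k, K ≤ k → x (k + 1) ≤ r * x k + d) :
    Filter.limsup x Filter.atTop ≤ d / (1 - r) := by
  have hbdd := bdd_of_contraction x r d hr0 hr1 hd K hrec
  have hcob : IsCoboundedUnder (· ≤ ·) Filter.atTop x :=
    isCoboundedUnder_le_of_le _ (fun i => hx i)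
  set L := Filter.limsup x Filter.atTop with hL
  have key : ∀ u, L < u → L ≤ r * u + d := by
    intro u hu
    have hev : ∀ᶠ k in atTop, x k < u := eventually_lt_of_limsup_lt hu hbdd
    rw [eventually_atTop] at hev
    obtain ⟨N, hN⟩ := hev
    refine limsup_le_of_le hcob ?_
    rw [eventually_atTop]
    refine ⟨max K N + 1, fun k hk => ?_⟩
    obtain ⟨m, rfl⟩ : ∃ m, k = m + 1 := ⟨k - 1, by omega⟩
    have hm : K ≤ m ∧ N ≤ m := by constructor <;> omega
    have := hrec m hm.1
    have h2 : r * x m ≤ r * u := mul_le_mul_of_nonneg_left (hN m hm.2).le hr0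
    linarith
  have hLr : L ≤ r * L + d := by
    refine helper_le_of_eps hr0 fun ε hε => ?_
    have := key (L + ε) (by linarith)
    linarith [this]
  rw [le_div_iff₀ (by linarith : (0:ℝ) < 1 - r)]
  nlinarith

/-- limit-superior consequence of the coupled DLSR error recursions:
if eventually `a_{k+1} ≤ (1−μβ)a_k + c` and
`b_{k+1} ≤ (1−μβ−μA)b_k + μta_k + c'`, with `0 < μβ ≤ μ(β+A) < 1`, then
`limsup a ≤ c/(μβ)` and `limsup b ≤ (tc/β + c')/(μ(β+A))`; in particular, for
`c = c' = μ²C + MΔ`, `limsup a ≤ (C/β)μ + (M/(βμ))Δ` and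
`limsup b ≤ (1 + t/β)((C/(β+A))μ + (M/((β+A)μ))Δ)`. -/
theorem limsup_of_coupled_error_recursions
    (a b : ℕ → ℝ) (ha : ∀ k, 0 ≤ a k) (hb : ∀ k, 0 ≤ b k)
    (μ β A t c c' : ℝ)
    (hμ : 0 ≤ μ) (hβ : 0 ≤ β) (hA : 0 ≤ A) (ht : 0 ≤ t) (hc : 0 ≤ c) (hc' : 0 ≤ c')
    (h1 : 0 < μ * β) (h2 : μ * β ≤ μ * (β + A)) (h3 : μ * (β + A) < 1)
    (hrec : ∃ K : ℕ, ∀ k : ℕ, K ≤ k →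
      a (k + 1) ≤ (1 - μ * β) * a k + c ∧
      b (k + 1) ≤ (1 - μ * β - μ * A) * b k + μ * t * a k + c') :
    Filter.limsup a Filter.atTop ≤ c / (μ * β) ∧
    Filter.limsup b Filter.atTop ≤ (t * c / β + c') / (μ * (β + A)) ∧
    (∀ C M Δ : ℝ, c = μ ^ 2 * C + M * Δ → c' = c →
      Filter.limsup a Filter.atTop ≤ C / β * μ + M / (β * μ) * Δ ∧
      Filter.limsup b Filter.atTop ≤
        (1 + t / β) * (C / (β + A) * μ + M / ((β + A) * μ) * Δ)) := by
  obtain ⟨K, hK⟩ := hrec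
  have hμ0 : 0 < μ := by nlinarith
  have hβ0 : 0 < β := by nlinarith
  have hβA : 0 < β + A := by linarith
  have haA : 0 < μ * (β + A) := lt_of_lt_of_le h1 h2
  have hexp : μ * (β + A) = μ * β + μ * A := by ring
  have hr0 : 0 ≤ 1 - μ * β := by linarith
  have hr1 : 1 - μ * β < 1 := by linarith
  have hr0' : 0 ≤ 1 - μ * β - μ * A := by linarith
  have hr1' : 1 - μ * β - μ * A < 1 := by linarith
  -- part 1
  have part1 : Filter.limsup a Filter.atTop ≤ c / (μ * β) := by
    have := limsup_of_contraction a ha (1 - μ * β) c hr0 hr1 hc K (fun k hk => (hK k hk).1)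
    rwa [show (1 : ℝ) - (1 - μ * β) = μ * β by ring] at this
  -- boundedness of a and nonneg limsup
  have habdd : Filter.IsBoundedUnder (· ≤ ·) Filter.atTop a :=
    bdd_of_contraction a (1 - μ * β) c hr0 hr1 hc K (fun k hk => (hK k hk).1)
  have hLa0 : 0 ≤ Filter.limsup a Filter.atTop :=
    le_limsup_of_frequently_le (Frequently.of_forall ha) habdd
  set La := Filter.limsup a Filter.atTop with hLadef
  -- part 2
  have hb2 : ∀ ε > 0, Filter.limsup b Filter.atTop ≤
      (μ * t * (La + ε) + c') / (μ * (β + A)) := by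
    intro ε hε
    have hev : ∀ᶠ k in atTop, a k < La + ε :=
      eventually_lt_of_limsup_lt (by linarith) habdd
    rw [eventually_atTop] at hev
    obtain ⟨N, hN⟩ := hev
    have := limsup_of_contraction b hb (1 - μ * β - μ * A) (μ * t * (La + ε) + c')
      hr0' hr1' (by positivity) (max K N) (fun k hk => by
        have h4 := (hK k (le_trans (le_max_left _ _) hk)).2
        have h5 : μ * t * a k ≤ μ * t * (La + ε) :=
          mul_le_mul_of_nonneg_left (hN k (le_trans (le_max_right _ _) hk)).le
            (by positivity)
        linarith)
    rwa [show (1 : ℝ) - (1 - μ * β - μ * A) = μ * (β + A) by ring] at this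
  have part2' : Filter.limsup b Filter.atTop ≤ (μ * t * La + c') / (μ * (β + A)) := by
    refine helper_le_of_eps (k := μ * t / (μ * (β + A))) (by positivity) fun ε hε => ?_
    have heq : (μ * t * (La + ε) + c') / (μ * (β + A)) =
        (μ * t * La + c') / (μ * (β + A)) + μ * t / (μ * (β + A)) * ε := by
      field_simp; ring
    linarith [hb2 ε hε, heq ▸ hb2 ε hε]
  have part2 : Filter.limsup b Filter.atTop ≤ (t * c / β + c') / (μ * (β + A)) := by
    refine le_trans part2' ?_
    have heq : μ * t * (c / (μ * β)) = t * c / β := by field_simp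
    have hnum : μ * t * La + c' ≤ t * c / β + c' := by
      have := mul_le_mul_of_nonneg_left part1 (by positivity : (0:ℝ) ≤ μ * t)
      linarith [heq ▸ this]
    gcongr
  refine ⟨part1, part2, fun C M Δ hcC hc'c => ?_⟩
  constructor
  · have heq : c / (μ * β) = C / β * μ + M / (β * μ) * Δ := by
      rw [hcC]; field_simp
    exact heq ▸ part1
  · have heq : (t * c / β + c') / (μ * (β + A)) =
        (1 + t / β) * (C / (β + A) * μ + M / ((β + A) * μ) * Δ) := by
      rw [hc'c, hcC]; field_simp; ring
    exact heq ▸ part2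
end

section
/- Let μ_1, β_1, C' > 0 and τ̄ ∈ ℕ, and set μ_k = μ_1/√k and β_k = β_1/k^{1/4} for k ≥ 1. Let (a_k)_{k≥1} be a bounded sequence of nonnegative reals satisfying a_k ≤ (1 − μ_k β_k)·a_{k−1} + C'·μ_k·μ_{k−τ̄} for all k > τ̄ + 1. Then there exists a constant L_+ > 0 such that a_k ≤ L_+ / k^{1/4} for all k ≥ 1. -/
set_option maxHeartbeats 1600000


/-- Out-of-band error decay lemma for diminishing stepsizes
`μ_k = μ_1/√k` and decay factors `β_k = β_1/k^{1/4}`: a bounded nonnegative sequence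
satisfying `a_k ≤ (1 − μ_kβ_k)a_{k−1} + C'μ_kμ_{k−τ̄}` for all `k > τ̄ + 1` decays
like `L_+ / k^{1/4}`. -/
theorem out_of_band_decay_diminishing_stepsize
    (μ1 β1 C' : ℝ) (hμ1 : 0 < μ1) (hβ1 : 0 < β1) (hC' : 0 < C') (τbar : ℕ)
    (a : ℕ → ℝ) (ha : ∀ k, 0 ≤ a k) (hbd : ∃ Bd : ℝ, ∀ k, a k ≤ Bd)
    (hrec : ∀ k : ℕ, τbar + 1 < k →
      a k ≤ (1 - (μ1 / Real.sqrt (k : ℝ)) * (β1 / (k : ℝ) ^ ((1 : ℝ) / 4))) * a (k - 1) +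
        C' * (μ1 / Real.sqrt (k : ℝ)) * (μ1 / Real.sqrt ((k - τbar : ℕ) : ℝ))) :
    ∃ L > (0 : ℝ), ∀ k : ℕ, 1 ≤ k → a k ≤ L / (k : ℝ) ^ ((1 : ℝ) / 4) := by
  obtain ⟨Bd0, hBd0⟩ := hbd
  obtain ⟨Bd, hBd, hBdpos⟩ : ∃ Bd : ℝ, (∀ k, a k ≤ Bd) ∧ 0 < Bd :=
    ⟨max Bd0 1, fun k => (hBd0 k).trans (le_max_left _ _),
      lt_of_lt_of_le one_pos (le_max_right _ _)⟩
  obtain ⟨c, hcdef⟩ : ∃ t : ℝ, t = μ1 * β1 := ⟨_, rfl⟩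
  have hcpos : 0 < c := hcdef ▸ mul_pos hμ1 hβ1
  obtain ⟨C2, hC2def⟩ : ∃ t : ℝ, t = 2 * C' * μ1 ^ 2 := ⟨_, rfl⟩
  have hC2pos : 0 < C2 := by rw [hC2def]; positivity
  have h4c : 0 < 4 / c := by positivity
  obtain ⟨M, hMc, hM4c, hM1⟩ : ∃ M : ℝ, c ≤ M ∧ 4 / c ≤ M ∧ 1 ≤ M :=
    ⟨4 / c + c + 1, by linarith, by linarith, by nlinarith⟩
  have hMpos : 0 < M := lt_of_lt_of_le one_pos hM1
  obtain ⟨K, hKτ, hKM⟩ : ∃ K : ℕ, 2 * τbar + 2 ≤ K ∧ M ^ 4 ≤ (K : ℝ) := by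
    refine ⟨max (2 * τbar + 2) (Nat.ceil (M ^ 4)), le_max_left _ _, ?_⟩
    have h1 : (Nat.ceil (M ^ 4) : ℕ) ≤ max (2 * τbar + 2) (Nat.ceil (M ^ 4)) :=
      le_max_right _ _
    have h2 : ((Nat.ceil (M ^ 4) : ℕ) : ℝ) ≤ ((max (2 * τbar + 2) (Nat.ceil (M ^ 4)) : ℕ) : ℝ) :=
      Nat.cast_le.mpr h1
    exact (Nat.le_ceil _).trans h2
  have hK1 : 1 ≤ K := by omega
  have hKpos : (0:ℝ) < K := by exact_mod_cast hK1
  obtain ⟨L, hL1, hL2⟩ : ∃ L : ℝ, Bd * (K:ℝ) ^ ((1:ℝ)/4) ≤ L ∧ 2 * C2 / c ≤ L :=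
    ⟨max (Bd * (K:ℝ) ^ ((1:ℝ)/4)) (2 * C2 / c), le_max_left _ _, le_max_right _ _⟩
  have hLpos : 0 < L := lt_of_lt_of_le (by positivity) hL2
  have hC2L : 2 * C2 ≤ L * c := (div_le_iff₀ hcpos).mp hL2
  -- base region
  have hbase : ∀ k : ℕ, 1 ≤ k → k ≤ K → a k ≤ L / (k:ℝ) ^ ((1:ℝ)/4) := by
    intro k hk1 hkK
    have hkpos : (0:ℝ) < k := by exact_mod_cast hk1
    have hx : (0:ℝ) < (k:ℝ) ^ ((1:ℝ)/4) := Real.rpow_pos_of_pos hkpos _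
    rw [le_div_iff₀ hx]
    have hxK : (k:ℝ) ^ ((1:ℝ)/4) ≤ (K:ℝ) ^ ((1:ℝ)/4) :=
      Real.rpow_le_rpow hkpos.le (by exact_mod_cast hkK) (by norm_num)
    calc a k * (k:ℝ) ^ ((1:ℝ)/4) ≤ Bd * (K:ℝ) ^ ((1:ℝ)/4) :=
          mul_le_mul (hBd k) hxK hx.le hBdpos.le
      _ ≤ L := hL1
  have hmain : ∀ k : ℕ, K ≤ k → a k ≤ L / (k:ℝ) ^ ((1:ℝ)/4) := by
    intro k hk
    induction k, hk using Nat.le_induction with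
    | base => exact hbase K hK1 le_rfl
    | succ n hn ih =>
      have hn1 : 1 ≤ n := hK1.trans hn
      have hnR : (1:ℝ) ≤ (n:ℝ) := by exact_mod_cast hn1
      have hnpos : (0:ℝ) < (n:ℝ) := by linarith only [hnR]
      have hKn : (K:ℝ) ≤ (n:ℝ) := by exact_mod_cast hn
      have hτKn : (2 * (τbar:ℝ) + 2 : ℝ) ≤ (n:ℝ) := by
        have h0 : ((2 * τbar + 2 : ℕ) : ℝ) ≤ (K:ℝ) := Nat.cast_le.mpr hKτ
        push_cast at h0
        linarith only [h0, hKn]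
      obtain ⟨mR, hmRdef⟩ : ∃ t : ℝ, t = (n:ℝ) + 1 := ⟨_, rfl⟩
      have hm0 : (0:ℝ) < mR := by rw [hmRdef]; linarith only [hnpos]
      have hm1 : (1:ℝ) ≤ mR := by rw [hmRdef]; linarith only [hnR]
      have hmn : (n:ℝ) ≤ mR := by rw [hmRdef]; linarith only []
      have hKmR : M ^ 4 ≤ mR := by rw [hmRdef]; linarith only [hKM, hKn]
      obtain ⟨x, hxdef⟩ : ∃ t : ℝ, t = (n:ℝ) ^ ((1:ℝ)/4) := ⟨_, rfl⟩
      obtain ⟨y, hydef⟩ : ∃ t : ℝ, t = mR ^ ((1:ℝ)/4) := ⟨_, rfl⟩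
      have ih' : a n ≤ L / x := by rw [hxdef]; exact ih
      have hx0 : 0 < x := hxdef ▸ Real.rpow_pos_of_pos hnpos _
      have hy0 : 0 < y := hydef ▸ Real.rpow_pos_of_pos hm0 _
      have hxy : x ≤ y := by
        rw [hxdef, hydef]
        exact Real.rpow_le_rpow hnpos.le hmn (by norm_num)
      have hyM : M ≤ y := by
        have h1 : M = (M ^ 4) ^ ((1:ℝ)/4) := by
          rw [← Real.rpow_natCast M 4, ← Real.rpow_mul hMpos.le]
          norm_num
        rw [hydef, h1]
        exact Real.rpow_le_rpow (by positivity) hKmR (by norm_num)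
      have hcy : 4 ≤ c * y := by
        have h4y : 4 / c ≤ y := le_trans hM4c hyM
        calc (4:ℝ) = c * (4 / c) := by field_simp
          _ ≤ c * y := mul_le_mul_of_nonneg_left h4y hcpos.le
      -- sqrt and rpow identities
      have hs : Real.sqrt mR = mR ^ ((1:ℝ)/2) := Real.sqrt_eq_rpow mR
      have hs0 : 0 < Real.sqrt mR := Real.sqrt_pos.mpr hm0
      have hsy : Real.sqrt mR * y = mR ^ ((3:ℝ)/4) := by
        rw [hs, hydef, ← Real.rpow_add hm0]; norm_num
      have h34pos : (0:ℝ) < mR ^ ((3:ℝ)/4) := Real.rpow_pos_of_pos hm0 _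
      have h34y : mR ^ ((3:ℝ)/4) * y = mR := by
        rw [hydef, ← Real.rpow_add hm0]; norm_num
      have h34M : c ≤ mR ^ ((3:ℝ)/4) := by
        have h5 : mR ^ ((1:ℝ)/4) ≤ mR ^ ((3:ℝ)/4) :=
          Real.rpow_le_rpow_of_exponent_le hm1 (by norm_num)
        have h6 : y ≤ mR ^ ((3:ℝ)/4) := hydef ▸ h5
        linarith only [h6, hMc.trans hyM]
      obtain ⟨d, hddef⟩ : ∃ t : ℝ, t = (μ1 / Real.sqrt mR) * (β1 / y) := ⟨_, rfl⟩
      have hd_eq : d = c / mR ^ ((3:ℝ)/4) := by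
        rw [hddef, div_mul_div_comm, hsy, hcdef]
      have hd0 : 0 ≤ d := by rw [hd_eq]; positivity
      have hd1 : d ≤ 1 := by
        rw [hd_eq, div_le_one h34pos]; exact h34M
      have hdm : d * mR = c * y := by
        rw [hd_eq, div_mul_eq_mul_div, div_eq_iff h34pos.ne']
        linear_combination (-c) * h34y
      -- recursion at n+1
      have hτn : τbar + 1 < n + 1 := by
        have : (2 * (τbar:ℝ) + 2 : ℝ) ≤ (n:ℝ) := hτKn
        have : 2 * τbar + 2 ≤ n := by exact_mod_cast this
        omega
      have hrecm := hrec (n + 1) hτn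
      simp only [Nat.add_sub_cancel] at hrecm
      have hcastm : ((n + 1 : ℕ) : ℝ) = mR := by rw [hmRdef]; push_cast; ring
      have hcastτ : (((n + 1) - τbar : ℕ) : ℝ) = mR - (τbar : ℝ) := by
        rw [Nat.cast_sub (by omega : τbar ≤ n + 1), hmRdef]; push_cast; ring
      rw [hcastm, hcastτ, ← hydef, ← hddef] at hrecm
      -- noise bound
      have hτhalf : mR / 4 ≤ mR - (τbar : ℝ) := by rw [hmRdef]; linarith only [hτKn, hnR]
      have hsqrt4 : Real.sqrt 4 = 2 := by
        rw [show (4:ℝ) = 2 ^ 2 by norm_num, Real.sqrt_sq (by norm_num : (0:ℝ) ≤ 2)]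
      have hsτ : Real.sqrt mR / 2 ≤ Real.sqrt (mR - (τbar : ℝ)) := by
        have h1 : Real.sqrt (mR / 4) ≤ Real.sqrt (mR - (τbar : ℝ)) :=
          Real.sqrt_le_sqrt hτhalf
        have h2 : Real.sqrt (mR / 4) = Real.sqrt mR / 2 := by
          rw [Real.sqrt_div hm0.le, hsqrt4]
        linarith only [h1, h2.le, h2.ge]
      have hsτ0 : 0 < Real.sqrt (mR - (τbar : ℝ)) := lt_of_lt_of_le (by positivity) hsτ
      have hnoise : C' * (μ1 / Real.sqrt mR) * (μ1 / Real.sqrt (mR - (τbar:ℝ))) ≤ C2 / mR := by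
        have h1 : μ1 / Real.sqrt (mR - (τbar:ℝ)) ≤ 2 * μ1 / Real.sqrt mR := by
          rw [div_le_div_iff₀ hsτ0 hs0]
          have hh := mul_le_mul_of_nonneg_left hsτ (by positivity : (0:ℝ) ≤ 2 * μ1)
          have he2 : 2 * μ1 * (Real.sqrt mR / 2) = μ1 * Real.sqrt mR := by ring
          linarith only [hh, he2]
        have h2 : C' * (μ1 / Real.sqrt mR) * (2 * μ1 / Real.sqrt mR) = C2 / mR := by
          have hring : C' * (μ1 / Real.sqrt mR) * (2 * μ1 / Real.sqrt mR)
              = 2 * C' * μ1 ^ 2 / (Real.sqrt mR * Real.sqrt mR) := by ring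
          rw [hC2def, hring, Real.mul_self_sqrt hm0.le]
        calc C' * (μ1 / Real.sqrt mR) * (μ1 / Real.sqrt (mR - (τbar:ℝ)))
            ≤ C' * (μ1 / Real.sqrt mR) * (2 * μ1 / Real.sqrt mR) := by
              apply mul_le_mul_of_nonneg_left h1 (by positivity)
          _ = C2 / mR := h2
      -- key comparison between x and y
      have hky : y * (n:ℝ) ≤ x * mR := by
        have hq1 : (1:ℝ) ≤ mR / (n:ℝ) := (one_le_div hnpos).mpr hmn
        have hq14 : (mR / (n:ℝ)) ^ ((1:ℝ)/4) ≤ mR / (n:ℝ) := by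
          calc (mR / (n:ℝ)) ^ ((1:ℝ)/4) ≤ (mR / (n:ℝ)) ^ (1:ℝ) :=
                Real.rpow_le_rpow_of_exponent_le hq1 (by norm_num)
            _ = mR / (n:ℝ) := Real.rpow_one _
        have hmq : mR = (n:ℝ) * (mR / (n:ℝ)) := by field_simp
        have hyxq : y = x * (mR / (n:ℝ)) ^ ((1:ℝ)/4) := by
          rw [hydef, hxdef]
          nth_rewrite 1 [hmq]
          rw [Real.mul_rpow hnpos.le (by positivity)]
        have h3 : y ≤ x * (mR / (n:ℝ)) := by
          rw [hyxq]
          exact mul_le_mul_of_nonneg_left hq14 hx0.le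
        have h4 : x * (mR / (n:ℝ)) * (n:ℝ) = x * mR := by field_simp
        calc y * (n:ℝ) ≤ x * (mR / (n:ℝ)) * (n:ℝ) :=
              mul_le_mul_of_nonneg_right h3 hnpos.le
          _ = x * mR := h4
      -- final inequality
      have hfinal : (1 - d) * (L / x) + C2 / mR ≤ L / y := by
        rw [mul_div_assoc', div_add_div _ _ hx0.ne' hm0.ne',
          div_le_div_iff₀ (by positivity) hy0]
        have hky' : y * mR ≤ x * mR + y := by
          have he : y * mR = y * (n:ℝ) + y := by rw [hmRdef]; ring
          linarith only [hky, he.le, he.ge]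
        have h1 : L * (y * mR) ≤ L * (x * mR + y) :=
          mul_le_mul_of_nonneg_left hky' hLpos.le
        have h2 : 2 * C2 * (y * y) ≤ L * c * (y * y) :=
          mul_le_mul_of_nonneg_right hC2L (mul_nonneg hy0.le hy0.le)
        have h3 : x * (C2 * y) ≤ y * (C2 * y) :=
          mul_le_mul_of_nonneg_right hxy (mul_nonneg hC2pos.le hy0.le)
        have h4 : 4 * (L * y) ≤ c * y * (L * y) :=
          mul_le_mul_of_nonneg_right hcy (mul_nonneg hLpos.le hy0.le)
        have h5 : 0 ≤ L * y := mul_nonneg hLpos.le hy0.le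
        have hdmy : d * mR * (L * y) = c * y * (L * y) := by rw [hdm]
        linarith only [h1, h2, h3, h4, h5, hdmy]
      have hstep1 : (1 - d) * a n ≤ (1 - d) * (L / x) :=
        mul_le_mul_of_nonneg_left ih' (by linarith only [hd1])
      calc a (n + 1) ≤ (1 - d) * a n + C' * (μ1 / Real.sqrt mR) *
            (μ1 / Real.sqrt (mR - (τbar:ℝ))) := hrecm
        _ ≤ (1 - d) * (L / x) + C2 / mR := add_le_add hstep1 hnoise
        _ ≤ L / y := hfinal
        _ = L / ((n + 1 : ℕ) : ℝ) ^ ((1:ℝ)/4) := by rw [hcastm, ← hydef]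
  refine ⟨L, hLpos, fun k hk1 => ?_⟩
  by_cases hkK : k ≤ K
  · exact hbase k hk1 hkK
  · exact hmain k (by omega)
end

section
/- Let μ_1, β_1, C', A, L_+ > 0 and τ̄ ∈ ℕ, and set μ_k = μ_1/√k and β_k = β_1/k^{1/4} for k ≥ 1. Let (b_k)_{k≥1} be a bounded sequence of nonnegative reals and (a_k)_{k≥1} a sequence with 0 ≤ a_k ≤ L_+ / k^{1/4} for all k ≥ 1, such that b_k ≤ (1 − μ_k β_k − μ_k A)·b_{k−1} + μ_k·a_{k−1} + C'·μ_k·μ_{k−τ̄} for all k > τ̄ + 1. Then there exists a constant L > 0 such that b_k ≤ L / k^{1/4} for all k ≥ 1. -/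
/-!
With `c = μ₁A`, drop the nonnegative `β`-term of the recursion and use `(k+1)^{1/4} ≤ 2 k^{1/4}`,
`(k+1)^{1/4} ≤ √(k+1) ≤ 2 √(k+1-τ̄)`: for large `k` this gives
`b_{k+1} ≤ (1 - c/√(k+1)) b_k + D / (k+1)^{3/4}` with `D = 2μ₁(L₊ + C'μ₁)`.
Since `((k+1)/k)^{1/4} ≤ 1 + 1/k` and `1/k` is eventually at most half of the contraction
`c/√(k+1)`, a bound `b_k ≤ L/k^{1/4}` propagates to `k+1` as soon as `2D ≤ cL`.
The finitely many early terms are absorbed into `L` using the bound on `b`.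
-/

open Real

lemma rpow_quarter_add_one_le {x : ℝ} (hx : 0 < x) :
    (x + 1) ^ ((1 : ℝ) / 4) ≤ (1 + 1 / x) * x ^ ((1 : ℝ) / 4) := by
  have h1 : 1 ≤ 1 + 1 / x := le_add_of_nonneg_right (by positivity)
  calc (x + 1) ^ ((1 : ℝ) / 4) = (1 + 1 / x) ^ ((1 : ℝ) / 4) * x ^ ((1 : ℝ) / 4) := by
        rw [← mul_rpow (by positivity) hx.le]; field_simp
    _ ≤ (1 + 1 / x) * x ^ ((1 : ℝ) / 4) := by
        gcongr; exact rpow_le_self_of_one_le h1 (by norm_num)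

lemma rpow_quarter_add_one_le_two_mul {x : ℝ} (hx : 1 ≤ x) :
    (x + 1) ^ ((1 : ℝ) / 4) ≤ 2 * x ^ ((1 : ℝ) / 4) := by
  have h : 1 / x ≤ 1 := by rw [div_le_one (by linarith)]; exact hx
  calc (x + 1) ^ ((1 : ℝ) / 4) ≤ (1 + 1 / x) * x ^ ((1 : ℝ) / 4) :=
        rpow_quarter_add_one_le (by linarith)
    _ ≤ 2 * x ^ ((1 : ℝ) / 4) := by gcongr; linarith

lemma rpow_quarter_le_sqrt {x : ℝ} (hx : 1 ≤ x) : x ^ ((1 : ℝ) / 4) ≤ √x := by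
  rw [sqrt_eq_rpow]; exact rpow_le_rpow_of_exponent_le hx (by norm_num)

lemma sqrt_le_two_mul_sqrt_sub {x y : ℝ} (h : 4 * y ≤ 3 * x) : √x ≤ 2 * √(x - y) := by
  calc √x ≤ √(4 * (x - y)) := sqrt_le_sqrt (by linarith)
    _ = 2 * √(x - y) := by
        rw [sqrt_mul (by norm_num), show (4 : ℝ) = 2 ^ 2 by norm_num, sqrt_sq (by norm_num)]

lemma contraction_step_rpow_quarter {c D L x y : ℝ} (hc : 0 ≤ c) (hL : 0 ≤ L)
    (hcx : c ^ 2 ≤ x) (hcx' : 8 ≤ c ^ 2 * x) (hD : 2 * D ≤ c * L)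
    (hy : y ≤ L / x ^ ((1 : ℝ) / 4)) :
    (1 - c / √(x + 1)) * y + D / (√(x + 1) * (x + 1) ^ ((1 : ℝ) / 4))
      ≤ L / (x + 1) ^ ((1 : ℝ) / 4) := by
  have hx : 1 ≤ x := by nlinarith
  set s := √(x + 1)
  set p := (x + 1) ^ ((1 : ℝ) / 4)
  have hs : 0 < s := sqrt_pos.2 (by linarith)
  have hss : s ^ 2 = x + 1 := sq_sqrt (by linarith)
  have hp : 0 < p := by positivity
  have ht : c / s ≤ 1 := by
    rw [div_le_one hs]; exact le_sqrt_of_sq_le (by linarith)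
  have hxt : 1 / x ≤ c / s / 2 := by
    have h2s : 2 * s ≤ c * x :=
      (pow_le_pow_iff_left₀ (by positivity) (by positivity) two_ne_zero).1 (by nlinarith)
    rw [div_le_iff₀ (by linarith)]
    field_simp
    linarith
  have hy' : y ≤ (1 + 1 / x) * (L / p) := by
    refine hy.trans ?_
    rw [mul_div_assoc', div_le_div_iff₀ (by positivity) hp]
    have := rpow_quarter_add_one_le (x := x) (by linarith)
    nlinarith
  have hDt : D / (s * p) ≤ c / s / 2 * (L / p) := by
    rw [show c / s / 2 * (L / p) = c * L / 2 / (s * p) by ring]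
    gcongr; linarith
  calc (1 - c / s) * y + D / (s * p)
      ≤ (1 - c / s) * ((1 + 1 / x) * (L / p)) + c / s / 2 * (L / p) := by
        gcongr
    _ ≤ (1 - c / s / 2) * (L / p) + c / s / 2 * (L / p) := by
        have hu : 0 ≤ 1 / x := by positivity
        have : (1 - c / s) * (1 + 1 / x) ≤ 1 - c / s / 2 := by nlinarith
        rw [← mul_assoc]; gcongr
    _ = L / p := by ring

lemma le_div_rpow_quarter_of_recursion {x : ℕ → ℝ} {c D L : ℝ} {K : ℕ} (hc : 0 ≤ c)
    (hL : 0 ≤ L) (hcK : c ^ 2 ≤ K) (hcK' : 8 ≤ c ^ 2 * K) (hD : 2 * D ≤ c * L)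
    (hrec : ∀ k ≥ K, x (k + 1) ≤
      (1 - c / √(k + 1)) * x k + D / (√(k + 1) * ((k : ℝ) + 1) ^ ((1 : ℝ) / 4)))
    (hK : x K ≤ L / (K : ℝ) ^ ((1 : ℝ) / 4)) {k : ℕ} (hk : K ≤ k) :
    x k ≤ L / (k : ℝ) ^ ((1 : ℝ) / 4) := by
  induction k, hk using Nat.le_induction with
  | base => exact hK
  | succ k hk ih =>
    have hkK : (K : ℝ) ≤ k := by exact_mod_cast hk
    push_cast
    exact (hrec k hk).trans <| contraction_step_rpow_quarter hc hL (hcK.trans hkK)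
      (hcK'.trans (by gcongr)) hD ih

lemma le_div_rpow_quarter_of_bounded_of_recursion {x : ℕ → ℝ} {B c D : ℝ} {K : ℕ}
    (hB : 0 ≤ B) (hxB : ∀ k, x k ≤ B) (hc : 0 < c) (hcK : c ^ 2 ≤ K) (hcK' : 8 ≤ c ^ 2 * K)
    (hrec : ∀ k ≥ K, x (k + 1) ≤
      (1 - c / √(k + 1)) * x k + D / (√(k + 1) * ((k : ℝ) + 1) ^ ((1 : ℝ) / 4)))
    {k : ℕ} (hk : 1 ≤ k) :
    x k ≤ max (B * (K : ℝ) ^ ((1 : ℝ) / 4)) (2 * D / c) / (k : ℝ) ^ ((1 : ℝ) / 4) := by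
  set L := max (B * (K : ℝ) ^ ((1 : ℝ) / 4)) (2 * D / c)
  have hL : 0 ≤ L := le_max_of_le_left (by positivity)
  have hD : 2 * D ≤ c * L := (div_le_iff₀' hc).1 (le_max_right _ _)
  have hbase : ∀ j, 1 ≤ j → j ≤ K → x j ≤ L / (j : ℝ) ^ ((1 : ℝ) / 4) := by
    intro j hj hjK
    rw [le_div_iff₀ (by positivity)]
    calc x j * (j : ℝ) ^ ((1 : ℝ) / 4) ≤ B * (K : ℝ) ^ ((1 : ℝ) / 4) := by
          gcongr
          exact hxB j
      _ ≤ L := le_max_left _ _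
  have hK : 1 ≤ K := Nat.one_le_iff_ne_zero.2 (by rintro rfl; norm_num at hcK')
  rcases le_total k K with hkK | hKk
  · exact hbase k hk hkK
  · exact le_div_rpow_quarter_of_recursion hc.le hL hcK hcK' hD hrec
      (hbase K hK le_rfl) hKk

lemma in_band_recursion_rhs_le {μ β A C' Lp τ k a b : ℝ} (hμ : 0 ≤ μ) (hβ : 0 ≤ β)
    (hC' : 0 ≤ C') (hLp : 0 ≤ Lp) (hk : 1 ≤ k) (hτ : 4 * τ ≤ 3 * (k + 1))
    (ha : a ≤ Lp / k ^ ((1 : ℝ) / 4)) (hb : 0 ≤ b) :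
    (1 - μ / √(k + 1) * (β / (k + 1) ^ ((1 : ℝ) / 4)) - μ / √(k + 1) * A) * b
        + μ / √(k + 1) * a + C' * (μ / √(k + 1)) * (μ / √(k + 1 - τ))
      ≤ (1 - μ * A / √(k + 1)) * b
        + 2 * μ * (Lp + C' * μ) / (√(k + 1) * (k + 1) ^ ((1 : ℝ) / 4)) := by
  set s := √(k + 1)
  set p := (k + 1) ^ ((1 : ℝ) / 4)
  have hs : 0 < s := sqrt_pos.2 (by linarith)
  have hp : 0 < p := by positivity
  have hdrop : 0 ≤ μ / s * (β / p) * b := by positivity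
  have ha' : a ≤ 2 * Lp / p := by
    refine ha.trans ?_
    rw [div_le_div_iff₀ (by positivity) hp]
    have := rpow_quarter_add_one_le_two_mul hk
    nlinarith
  have hτ' : μ / √(k + 1 - τ) ≤ 2 * μ / p := by
    have hps : p ≤ 2 * √(k + 1 - τ) :=
      (rpow_quarter_le_sqrt (by linarith)).trans (sqrt_le_two_mul_sqrt_sub hτ)
    calc μ / √(k + 1 - τ) = 2 * μ / (2 * √(k + 1 - τ)) :=
          (mul_div_mul_left _ _ two_ne_zero).symm
      _ ≤ 2 * μ / p := div_le_div_of_nonneg_left (by positivity) hp hps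
  calc (1 - μ / s * (β / p) - μ / s * A) * b + μ / s * a + C' * (μ / s) * (μ / √(k + 1 - τ))
      ≤ (1 - μ * A / s) * b + μ / s * (2 * Lp / p) + C' * (μ / s) * (2 * μ / p) := by
        have hμs : 0 ≤ μ / s := by positivity
        have := mul_le_mul_of_nonneg_left ha' hμs
        have := mul_le_mul_of_nonneg_left hτ' (mul_nonneg hC' hμs)
        have : μ / s * A = μ * A / s := by ring
        nlinarith
    _ = (1 - μ * A / s) * b + 2 * μ * (Lp + C' * μ) / (s * p) := by
        field_simp; ring

/-- In-band error decay lemma for diminishing stepsizes `μ_k = μ_1/√k`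
and decay factors `β_k = β_1/k^{1/4}`: if `a_k ≤ L_+/k^{1/4}` and the bounded
nonnegative sequence `b` satisfies
`b_k ≤ (1 − μ_kβ_k − μ_kA)b_{k−1} + μ_ka_{k−1} + C'μ_kμ_{k−τ̄}` for `k > τ̄ + 1`,
then `b_k ≤ L/k^{1/4}` for some constant `L > 0`. -/
theorem in_band_decay_diminishing_stepsize
    (μ1 β1 C' A Lp : ℝ) (hμ1 : 0 < μ1) (hβ1 : 0 < β1) (hC' : 0 < C')
    (hA : 0 < A) (hLp : 0 < Lp) (τbar : ℕ)
    (b : ℕ → ℝ) (hb : ∀ k, 0 ≤ b k) (hbd : ∃ Bd : ℝ, ∀ k, b k ≤ Bd)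
    (a : ℕ → ℝ)
    (ha : ∀ k : ℕ, 1 ≤ k → 0 ≤ a k ∧ a k ≤ Lp / (k : ℝ) ^ ((1 : ℝ) / 4))
    (hrec : ∀ k : ℕ, τbar + 1 < k →
      b k ≤ (1 - (μ1 / Real.sqrt (k : ℝ)) * (β1 / (k : ℝ) ^ ((1 : ℝ) / 4)) -
          (μ1 / Real.sqrt (k : ℝ)) * A) * b (k - 1) +
        (μ1 / Real.sqrt (k : ℝ)) * a (k - 1) +
        C' * (μ1 / Real.sqrt (k : ℝ)) * (μ1 / Real.sqrt ((k - τbar : ℕ) : ℝ))) :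
    ∃ L > (0 : ℝ), ∀ k : ℕ, 1 ≤ k → b k ≤ L / (k : ℝ) ^ ((1 : ℝ) / 4) := by
  obtain ⟨Bd, hBd⟩ := hbd
  set c := μ1 * A
  have hc : 0 < c := by positivity
  obtain ⟨K, hcK, hcK', hτK⟩ : ∃ K : ℕ, c ^ 2 ≤ K ∧ 8 ≤ c ^ 2 * K ∧ 2 * τbar + 1 ≤ K := by
    refine ⟨⌈c ^ 2 + 8 / c ^ 2⌉₊ + 2 * τbar + 1, ?_⟩
    have hK : c ^ 2 + 8 / c ^ 2 ≤ (⌈c ^ 2 + 8 / c ^ 2⌉₊ + 2 * τbar + 1 : ℕ) := by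
      have := Nat.le_ceil (c ^ 2 + 8 / c ^ 2)
      push_cast
      linarith [(by positivity : (0 : ℝ) ≤ 2 * τbar + 1)]
    have h8 : c ^ 2 * (8 / c ^ 2) = 8 := mul_div_cancel₀ _ (by positivity)
    refine ⟨by linarith [(by positivity : 0 ≤ 8 / c ^ 2)], ?_, by omega⟩
    nlinarith [(by positivity : 0 ≤ c ^ 2)]
  have hrec' : ∀ k ≥ K, b (k + 1) ≤ (1 - c / √(k + 1)) * b k
      + 2 * μ1 * (Lp + C' * μ1) / (√(k + 1) * ((k : ℝ) + 1) ^ ((1 : ℝ) / 4)) := by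
    intro k hk
    have h := hrec (k + 1) (by omega)
    push_cast [Nat.add_sub_cancel, Nat.cast_sub (show τbar ≤ k + 1 by omega)] at h
    refine h.trans (in_band_recursion_rhs_le hμ1.le hβ1.le hC'.le hLp.le ?_ ?_
      (ha k (by omega)).2 (hb k))
    · exact_mod_cast (show 1 ≤ k by omega)
    · exact_mod_cast (show 4 * τbar ≤ 3 * (k + 1) by omega)
  exact ⟨_, lt_max_of_lt_right (by positivity), fun k hk =>
    le_div_rpow_quarter_of_bounded_of_recursion ((hb 0).trans (hBd 0)) hBd hc hcK hcK' hrec' hk⟩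
end

section
/- Let L be a real symmetric positive semidefinite N×N matrix, S ⊆ Fin N a set of indices with complement S^c, and let σ_min² denote the smallest eigenvalue of the principal submatrix of L² obtained by keeping only the rows and columns indexed by S^c. Let ω ≥ 0 with ω < σ_min. Then S is a uniqueness set for PW_ω: any vector f ∈ ℝ^N lying in the span of eigenvectors of L with eigenvalues at most ω and satisfying f(u) = 0 for all u ∈ S must be the zero vector. -/
/-!
Eigenvectors of the positive semidefinite `L` with eigenvalue `c ∈ [0, ω]` are eigenvectors of
`L²` with eigenvalue `c² ≤ ω²`, so a signal `f ∈ PW_ω` has no component along eigenvectors of `L²`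
with eigenvalue above `ω²`, and `fᵀ L² f ≤ ω² ‖f‖²`. If `f` vanishes on `S`, then `fᵀ L² f` is the
quadratic form of the principal submatrix of `L²` on `Sᶜ` at `f|_{Sᶜ}`, which is at least
`σ_min² ‖f‖²`. As `ω² < σ_min²`, this forces `f = 0`.
-/

open Matrix

namespace Matrix

variable {n : Type*} [Fintype n]

section Restriction

variable {s : Finset n}

theorem dotProduct_comp_subtype_val (x y : n → ℝ) (hy : ∀ i ∉ s, y i = 0) :
    (x ∘ Subtype.val : s → ℝ) ⬝ᵥ (y ∘ Subtype.val) = x ⬝ᵥ y := by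
  simp only [dotProduct, Function.comp_apply]
  rw [Finset.sum_coe_sort s fun i => x i * y i]
  exact Finset.sum_subset (Finset.subset_univ s) fun i _ hi => by simp [hy i hi]

theorem submatrix_mulVec_comp_subtype_val (A : Matrix n n ℝ) (y : n → ℝ)
    (hy : ∀ i ∉ s, y i = 0) :
    A.submatrix (Subtype.val : s → n) (Subtype.val : s → n) *ᵥ (y ∘ Subtype.val) =
      (A *ᵥ y) ∘ Subtype.val :=
  funext fun i => dotProduct_comp_subtype_val (A i) y hy

theorem dotProduct_submatrix_mulVec_comp_subtype_val (A : Matrix n n ℝ) (y : n → ℝ)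
    (hy : ∀ i ∉ s, y i = 0) :
    (y ∘ Subtype.val : s → ℝ) ⬝ᵥ
      (A.submatrix Subtype.val (Subtype.val : s → n) *ᵥ (y ∘ Subtype.val)) =
      y ⬝ᵥ (A *ᵥ y) := by
  rw [submatrix_mulVec_comp_subtype_val A y hy, dotProduct_comm,
    dotProduct_comp_subtype_val _ _ hy, dotProduct_comm]

end Restriction

theorem PosSemidef.nonneg_of_mulVec_eq_smul {A : Matrix n n ℝ} (hA : A.PosSemidef)
    {v : n → ℝ} (hv : v ≠ 0) {c : ℝ} (hAv : A *ᵥ v = c • v) : 0 ≤ c := by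
  have hvv : 0 < v ⬝ᵥ v := lt_of_le_of_ne (dotProduct_star_self_nonneg v)
    (Ne.symm (dotProduct_self_eq_zero.not.mpr hv))
  have h := hA.dotProduct_mulVec_nonneg v
  rw [star_trivial, hAv, dotProduct_smul, smul_eq_mul] at h
  exact nonneg_of_mul_nonneg_left h hvv

theorem PosSemidef.span_eigenvectors_le_span_eigenvectors_mul_self {L : Matrix n n ℝ}
    (hL : L.PosSemidef) (ω : ℝ) :
    Submodule.span ℝ {v | ∃ c ≤ ω, L *ᵥ v = c • v} ≤
      Submodule.span ℝ {v | ∃ μ ≤ ω ^ 2, (L * L) *ᵥ v = μ • v} := by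
  refine Submodule.span_mono fun v ⟨c, hcω, hLv⟩ => ?_
  by_cases hv : v = 0
  · exact ⟨0, sq_nonneg ω, by simp [hv]⟩
  have hc : 0 ≤ c := hL.nonneg_of_mulVec_eq_smul hv hLv
  refine ⟨c ^ 2, pow_le_pow_left₀ hc hcω 2, ?_⟩
  rw [← mulVec_mulVec, hLv, mulVec_smul, hLv, smul_smul, sq]

namespace IsHermitian

variable [DecidableEq n] {A : Matrix n n ℝ} (hA : A.IsHermitian)
include hA

theorem eigenvectorBasis_dotProduct_mulVec (i : n) (y : n → ℝ) :
    (hA.eigenvectorBasis i : n → ℝ) ⬝ᵥ (A *ᵥ y) =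
      hA.eigenvalues i * ((hA.eigenvectorBasis i : n → ℝ) ⬝ᵥ y) := by
  rw [dotProduct_mulVec, ← mulVec_transpose, ← conjTranspose_eq_transpose_of_trivial, hA.eq,
    hA.mulVec_eigenvectorBasis, smul_dotProduct, smul_eq_mul]

theorem eigenvectorBasis_dotProduct_eq_zero {μ : ℝ} {v : n → ℝ} (hAv : A *ᵥ v = μ • v) {i : n}
    (hi : hA.eigenvalues i ≠ μ) : (hA.eigenvectorBasis i : n → ℝ) ⬝ᵥ v = 0 := by
  have h := hA.eigenvectorBasis_dotProduct_mulVec i v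
  rw [hAv, dotProduct_smul, smul_eq_mul] at h
  by_contra hv
  exact hi (mul_right_cancel₀ hv h.symm)

theorem dotProduct_eq_sum_eigenvectorBasis (x y : n → ℝ) :
    x ⬝ᵥ y = ∑ i, ((hA.eigenvectorBasis i : n → ℝ) ⬝ᵥ x) *
      ((hA.eigenvectorBasis i : n → ℝ) ⬝ᵥ y) := by
  have := hA.eigenvectorBasis.sum_inner_mul_inner (WithLp.toLp 2 x) (WithLp.toLp 2 y)
  simp only [EuclideanSpace.inner_eq_star_dotProduct, star_trivial] at this
  rw [dotProduct_comm, ← this]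
  exact Finset.sum_congr rfl fun i _ => by rw [dotProduct_comm y]

theorem dotProduct_mulVec_eq_sum_eigenvalues (x : n → ℝ) :
    x ⬝ᵥ (A *ᵥ x) = ∑ i, hA.eigenvalues i * ((hA.eigenvectorBasis i : n → ℝ) ⬝ᵥ x) ^ 2 := by
  rw [hA.dotProduct_eq_sum_eigenvectorBasis]
  exact Finset.sum_congr rfl fun i _ => by rw [eigenvectorBasis_dotProduct_mulVec]; ring

theorem dotProduct_self_eq_sum_sq (x : n → ℝ) :
    x ⬝ᵥ x = ∑ i, ((hA.eigenvectorBasis i : n → ℝ) ⬝ᵥ x) ^ 2 := by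
  simp only [hA.dotProduct_eq_sum_eigenvectorBasis x x, sq]

theorem mul_dotProduct_self_le_dotProduct_mulVec {c : ℝ} (hc : ∀ i, c ≤ hA.eigenvalues i)
    (x : n → ℝ) : c * (x ⬝ᵥ x) ≤ x ⬝ᵥ (A *ᵥ x) := by
  rw [hA.dotProduct_mulVec_eq_sum_eigenvalues, hA.dotProduct_self_eq_sum_sq, Finset.mul_sum]
  gcongr with i
  exact hc i

theorem dotProduct_mulVec_le_mul_dotProduct_self {c : ℝ} {x : n → ℝ}
    (hx : ∀ i, c < hA.eigenvalues i → (hA.eigenvectorBasis i : n → ℝ) ⬝ᵥ x = 0) :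
    x ⬝ᵥ (A *ᵥ x) ≤ c * (x ⬝ᵥ x) := by
  rw [hA.dotProduct_mulVec_eq_sum_eigenvalues, hA.dotProduct_self_eq_sum_sq, Finset.mul_sum]
  refine Finset.sum_le_sum fun i _ => ?_
  by_cases hi : c < hA.eigenvalues i
  · simp [hx i hi]
  · exact mul_le_mul_of_nonneg_right (not_lt.mp hi) (sq_nonneg _)

theorem eigenvectorBasis_dotProduct_eq_zero_of_mem_span {c : ℝ} {x : n → ℝ}
    (hx : x ∈ Submodule.span ℝ {v | ∃ μ ≤ c, A *ᵥ v = μ • v})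
    (i : n) (hi : c < hA.eigenvalues i) : (hA.eigenvectorBasis i : n → ℝ) ⬝ᵥ x = 0 := by
  induction hx using Submodule.span_induction with
  | mem v hv =>
    obtain ⟨μ, hμ, hAv⟩ := hv
    exact hA.eigenvectorBasis_dotProduct_eq_zero hAv (hμ.trans_lt hi).ne'
  | zero => exact dotProduct_zero _
  | add x y _ _ hx hy => rw [dotProduct_add, hx, hy, add_zero]
  | smul a x _ hx => rw [dotProduct_smul, hx, smul_zero]

end IsHermitian

end Matrix

theorem uniqueness_set_from_smallest_singular_value_general
    {N : ℕ} (L : Matrix (Fin N) (Fin N) ℝ)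
    (hLpsd : L.PosSemidef)
    (S : Finset (Fin N)) (σmin : ℝ)
    (hM : ((L * L).submatrix (Subtype.val : {v : Fin N // v ∈ Sᶜ} → Fin N)
      Subtype.val).IsHermitian)
    (hσ : IsLeast (Set.range hM.eigenvalues) (σmin ^ 2))
    (ω : ℝ) (hω0 : 0 ≤ ω) (hωσ : ω < σmin)
    (f : Fin N → ℝ)
    (hf : f ∈ Submodule.span ℝ {v : Fin N → ℝ | ∃ c : ℝ, c ≤ ω ∧ L.mulVec v = c • v})
    (hfS : ∀ u ∈ S, f u = 0) :
    f = 0 := by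
  have hA : (L * L).IsHermitian := by
    simpa only [hLpsd.1.eq] using isHermitian_conjTranspose_mul_self L
  have hupper : f ⬝ᵥ ((L * L) *ᵥ f) ≤ ω ^ 2 * (f ⬝ᵥ f) :=
    hA.dotProduct_mulVec_le_mul_dotProduct_self <|
      hA.eigenvectorBasis_dotProduct_eq_zero_of_mem_span <|
        hLpsd.span_eigenvectors_le_span_eigenvectors_mul_self ω hf
  have hfSc : ∀ u, u ∉ Sᶜ → f u = 0 := fun u hu => hfS u (Finset.notMem_compl.mp hu)
  have hlower : σmin ^ 2 * (f ⬝ᵥ f) ≤ f ⬝ᵥ ((L * L) *ᵥ f) := by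
    rw [← dotProduct_comp_subtype_val f f hfSc,
      ← dotProduct_submatrix_mulVec_comp_subtype_val _ f hfSc]
    exact hM.mul_dotProduct_self_le_dotProduct_mulVec (fun i => hσ.2 ⟨i, rfl⟩) _
  have hωσ2 : ω ^ 2 < σmin ^ 2 := by gcongr
  have hff : 0 ≤ f ⬝ᵥ f := dotProduct_star_self_nonneg f
  exact dotProduct_self_eq_zero.mp (by nlinarith)

/-- If `L` is a real symmetric positive semidefinite `N×N` matrix,
`σ_min²` is the smallest eigenvalue of the principal submatrix of `L²` indexed by the
complement of `S`, and `0 ≤ ω < σ_min`, then `S` is a uniqueness set for `PW_ω`: any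
vector in the span of eigenvectors of `L` with eigenvalues `≤ ω` that vanishes on `S`
is zero. -/
theorem uniqueness_set_from_smallest_singular_value
    {N : ℕ} (L : Matrix (Fin N) (Fin N) ℝ)
    (hLsymm : L.IsSymm) (hLpsd : L.PosSemidef)
    (S : Finset (Fin N)) (σmin : ℝ) (hσ0 : 0 ≤ σmin)
    (hM : ((L * L).submatrix (Subtype.val : {v : Fin N // v ∈ Sᶜ} → Fin N)
      Subtype.val).IsHermitian)
    (hσ : IsLeast (Set.range hM.eigenvalues) (σmin ^ 2))
    (ω : ℝ) (hω0 : 0 ≤ ω) (hωσ : ω < σmin)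
    (f : Fin N → ℝ)
    (hf : f ∈ Submodule.span ℝ {v : Fin N → ℝ | ∃ c : ℝ, c ≤ ω ∧ L.mulVec v = c • v})
    (hfS : ∀ u ∈ S, f u = 0) :
    f = 0 :=
  uniqueness_set_from_smallest_singular_value_general L hLpsd S σmin hM hσ ω hω0 hωσ f hf hfS
end
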